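/- arXiv:2309.09856 — 3 statements merged into one kernel-verified Lean document; each statement's English description precedes it below -/
import Mathlib

section
/- For p > 1, there exist constants 0 < c ≤ C < ∞ such that for all w, z ∈ R^n, c · |z-w|^2 (max(|w|,|z|))^{p-2} ≤ F_p(w,z) ≤ C · |z-w|^2 (max(|w|,|z|))^{p-2}, where F_p is the Bregman divergence. -/
open Real



lemma bern_ge {q x y : ℝ} (hq : 1 ≤ q) (hx : 0 ≤ x) (hy : 0 < y) :
    y ^ q + q * y ^ (q - 1) * (x - y) ≤ x ^ q := by
  have hs : -1 ≤ x / y - 1 := by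
    have : 0 ≤ x / y := div_nonneg hx hy.le
    linarith
  have h := one_add_mul_self_le_rpow_one_add hs hq
  have hxy : (1 + (x / y - 1)) = x / y := by ring
  rw [hxy, div_rpow hx hy.le] at h
  have hyq : 0 < y ^ q := rpow_pos_of_pos hy _
  have h2 : (1 + q * (x / y - 1)) * y ^ q ≤ x ^ q := by
    rw [← le_div_iff₀ hyq]
    exact h
  have h3 : y ^ (q - 1) = y ^ q / y := rpow_sub_one hy.ne' q
  calc y ^ q + q * y ^ (q - 1) * (x - y)
      = (1 + q * (x / y - 1)) * y ^ q := by
        rw [h3]; field_simp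
    _ ≤ x ^ q := h2

lemma bern_le {q x y : ℝ} (hq0 : 0 ≤ q) (hq : q ≤ 1) (hx : 0 ≤ x) (hy : 0 < y) :
    x ^ q ≤ y ^ q + q * y ^ (q - 1) * (x - y) := by
  have hs : -1 ≤ x / y - 1 := by
    have : 0 ≤ x / y := div_nonneg hx hy.le
    linarith
  have h := rpow_one_add_le_one_add_mul_self hs hq0 hq
  have hxy : (1 + (x / y - 1)) = x / y := by ring
  rw [hxy, div_rpow hx hy.le] at h
  have hyq : 0 < y ^ q := rpow_pos_of_pos hy _
  have h2 : x ^ q ≤ (1 + q * (x / y - 1)) * y ^ q := by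
    rw [← div_le_iff₀ hyq]
    exact h
  have h3 : y ^ (q - 1) = y ^ q / y := rpow_sub_one hy.ne' q
  calc x ^ q ≤ (1 + q * (x / y - 1)) * y ^ q := h2
    _ = y ^ q + q * y ^ (q - 1) * (x - y) := by rw [h3]; field_simp

lemma half_rpow {b : ℝ} (hb : 0 ≤ b) (p : ℝ) : (b/2)^(p-2) = b^(p-2) * 2^(2-p) := by
  rw [div_rpow hb (by norm_num)]
  rw [show (2:ℝ)-p = -(p-2) by ring, Real.rpow_neg (by norm_num)]
  ring

/-- Pointwise two-sided bound on the integrand, case `b/2 ≤ a ≤ t ≤ b`. -/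
lemma ptwise1 {p a b t : ℝ} (hp : 1 < p) (hb : 0 < b) (hba : b/2 ≤ a) (hat : a ≤ t) (htb : t ≤ b) :
    (p-1) * min 1 (2^(2-p)) * b^(p-2) * (t-a) ≤ t^(p-1) - a^(p-1) ∧
    t^(p-1) - a^(p-1) ≤ (p-1) * max 1 (2^(2-p)) * b^(p-2) * (t-a) := by
  have ha : 0 < a := lt_of_lt_of_le (by linarith) hba
  have ht : 0 < t := lt_of_lt_of_le ha hat
  have hq : (0:ℝ) < p - 1 := by linarith
  have hbp : 0 ≤ b^(p-2) := rpow_nonneg hb.le _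
  have hta : 0 ≤ t - a := by linarith
  have hmin1 : min (1:ℝ) (2^(2-p)) ≤ 1 := min_le_left _ _
  have hmin2 : min (1:ℝ) (2^(2-p)) ≤ 2^(2-p) := min_le_right _ _
  have hmax1 : (1:ℝ) ≤ max 1 (2^(2-p)) := le_max_left _ _
  have hmax2 : (2:ℝ)^(2-p) ≤ max 1 (2^(2-p)) := le_max_right _ _
  have hhalf : (b/2)^(p-2) = b^(p-2) * 2^(2-p) := half_rpow hb.le p
  have he : p - 1 - 1 = p - 2 := by ring
  have X0 : 0 ≤ b^(p-2) * (t-a) := mul_nonneg hbp hta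
  rcases le_or_gt p 2 with hp2 | hp2
  · constructor
    · -- lower, concave case: tangent at t
      have h := bern_le (q := p-1) (by linarith) (by linarith) ha.le ht
      rw [he] at h
      have hmono : b^(p-2) ≤ t^(p-2) :=
        rpow_le_rpow_of_nonpos ht htb (by linarith)
      have s1 : (p-1) * (b^(p-2)*(t-a)) ≤ (p-1) * (t^(p-2)*(t-a)) :=
        mul_le_mul_of_nonneg_left (mul_le_mul_of_nonneg_right hmono hta) (by linarith)
      have s2 : min 1 (2^(2-p)) * ((p-1) * (b^(p-2)*(t-a))) ≤ 1 * ((p-1)*(b^(p-2)*(t-a))) :=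
        mul_le_mul_of_nonneg_right hmin1 (mul_nonneg (by linarith) X0)
      nlinarith [s1, s2, h]
    · -- upper, concave case: tangent at a
      have h := bern_le (q := p-1) (by linarith) (by linarith) ht.le ha
      rw [he] at h
      have hmono : a^(p-2) ≤ (b/2)^(p-2) :=
        rpow_le_rpow_of_nonpos (by linarith) hba (by linarith)
      rw [hhalf] at hmono
      have s1 : (p-1) * (a^(p-2)*(t-a)) ≤ (p-1) * ((b^(p-2)*2^(2-p))*(t-a)) :=
        mul_le_mul_of_nonneg_left (mul_le_mul_of_nonneg_right hmono hta) (by linarith)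
      have s2 : 2^(2-p) * ((p-1)*(b^(p-2)*(t-a))) ≤ max 1 (2^(2-p)) * ((p-1)*(b^(p-2)*(t-a))) :=
        mul_le_mul_of_nonneg_right hmax2 (mul_nonneg (by linarith) X0)
      nlinarith [s1, s2, h]
  · constructor
    · -- lower, convex case: tangent at a
      have h := bern_ge (q := p-1) (by linarith) ht.le ha
      rw [he] at h
      have hmono : (b/2)^(p-2) ≤ a^(p-2) :=
        rpow_le_rpow (by linarith) hba (by linarith)
      rw [hhalf] at hmono
      have s1 : (p-1) * ((b^(p-2)*2^(2-p))*(t-a)) ≤ (p-1) * (a^(p-2)*(t-a)) :=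
        mul_le_mul_of_nonneg_left (mul_le_mul_of_nonneg_right hmono hta) (by linarith)
      have s2 : min 1 (2^(2-p)) * ((p-1)*(b^(p-2)*(t-a))) ≤ 2^(2-p) * ((p-1)*(b^(p-2)*(t-a))) :=
        mul_le_mul_of_nonneg_right hmin2 (mul_nonneg (by linarith) X0)
      nlinarith [s1, s2, h]
    · -- upper, convex case: tangent at t
      have h := bern_ge (q := p-1) (by linarith) ha.le ht
      rw [he] at h
      have hmono : t^(p-2) ≤ b^(p-2) :=
        rpow_le_rpow ht.le htb (by linarith)
      have s1 : (p-1) * (t^(p-2)*(t-a)) ≤ (p-1) * (b^(p-2)*(t-a)) :=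
        mul_le_mul_of_nonneg_left (mul_le_mul_of_nonneg_right hmono hta) (by linarith)
      have s2 : 1 * ((p-1)*(b^(p-2)*(t-a))) ≤ max 1 (2^(2-p)) * ((p-1)*(b^(p-2)*(t-a))) :=
        mul_le_mul_of_nonneg_right hmax1 (mul_nonneg (by linarith) X0)
      nlinarith [s1, s2, h]

/-- Pointwise two-sided bound, case `a/2 ≤ b ≤ t ≤ a` (integrand for the decreasing side). -/
lemma ptwise2 {p a b t : ℝ} (hp : 1 < p) (ha : 0 < a) (hab : a/2 ≤ b) (hbt : b ≤ t) (hta : t ≤ a) :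
    (p-1) * min 1 (2^(2-p)) * a^(p-2) * (a-t) ≤ a^(p-1) - t^(p-1) ∧
    a^(p-1) - t^(p-1) ≤ (p-1) * max 1 (2^(2-p)) * a^(p-2) * (a-t) := by
  have hb : 0 < b := lt_of_lt_of_le (by linarith) hab
  have ht : 0 < t := lt_of_lt_of_le hb hbt
  have hq : (0:ℝ) < p - 1 := by linarith
  have hap : 0 ≤ a^(p-2) := rpow_nonneg ha.le _
  have hat : 0 ≤ a - t := by linarith
  have hmin1 : min (1:ℝ) (2^(2-p)) ≤ 1 := min_le_left _ _
  have hmin2 : min (1:ℝ) (2^(2-p)) ≤ 2^(2-p) := min_le_right _ _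
  have hmax1 : (1:ℝ) ≤ max 1 (2^(2-p)) := le_max_left _ _
  have hmax2 : (2:ℝ)^(2-p) ≤ max 1 (2^(2-p)) := le_max_right _ _
  have hhalf : (a/2)^(p-2) = a^(p-2) * 2^(2-p) := half_rpow ha.le p
  have he : p - 1 - 1 = p - 2 := by ring
  have X0 : 0 ≤ a^(p-2) * (a-t) := mul_nonneg hap hat
  rcases le_or_gt p 2 with hp2 | hp2
  · constructor
    · -- lower, concave: tangent at a
      have h := bern_le (q := p-1) (by linarith) (by linarith) ht.le ha
      rw [he] at h
      have s2 : min 1 (2^(2-p)) * ((p-1)*(a^(p-2)*(a-t))) ≤ 1 * ((p-1)*(a^(p-2)*(a-t))) :=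
        mul_le_mul_of_nonneg_right hmin1 (mul_nonneg (by linarith) X0)
      nlinarith [s2, h]
    · -- upper, concave: tangent at t
      have h := bern_le (q := p-1) (by linarith) (by linarith) ha.le ht
      rw [he] at h
      have hmono : t^(p-2) ≤ (a/2)^(p-2) :=
        rpow_le_rpow_of_nonpos (by linarith) (by linarith [hbt, hab]) (by linarith)
      rw [hhalf] at hmono
      have s1 : (p-1) * (t^(p-2)*(a-t)) ≤ (p-1) * ((a^(p-2)*2^(2-p))*(a-t)) :=
        mul_le_mul_of_nonneg_left (mul_le_mul_of_nonneg_right hmono hat) (by linarith)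
      have s2 : 2^(2-p) * ((p-1)*(a^(p-2)*(a-t))) ≤ max 1 (2^(2-p)) * ((p-1)*(a^(p-2)*(a-t))) :=
        mul_le_mul_of_nonneg_right hmax2 (mul_nonneg (by linarith) X0)
      nlinarith [s1, s2, h]
  · constructor
    · -- lower, convex: tangent at t
      have h := bern_ge (q := p-1) (by linarith) ha.le ht
      rw [he] at h
      have hmono : (a/2)^(p-2) ≤ t^(p-2) :=
        rpow_le_rpow (by linarith) (by linarith [hbt, hab]) (by linarith)
      rw [hhalf] at hmono
      have s1 : (p-1) * ((a^(p-2)*2^(2-p))*(a-t)) ≤ (p-1) * (t^(p-2)*(a-t)) :=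
        mul_le_mul_of_nonneg_left (mul_le_mul_of_nonneg_right hmono hat) (by linarith)
      have s2 : min 1 (2^(2-p)) * ((p-1)*(a^(p-2)*(a-t))) ≤ 2^(2-p) * ((p-1)*(a^(p-2)*(a-t))) :=
        mul_le_mul_of_nonneg_right hmin2 (mul_nonneg (by linarith) X0)
      nlinarith [s1, s2, h]
    · -- upper, convex: tangent at a
      have h := bern_ge (q := p-1) (by linarith) ht.le ha
      rw [he] at h
      have s2 : 1 * ((p-1)*(a^(p-2)*(a-t))) ≤ max 1 (2^(2-p)) * ((p-1)*(a^(p-2)*(a-t))) :=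
        mul_le_mul_of_nonneg_right hmax1 (mul_nonneg (by linarith) X0)
      nlinarith [s2, h]

-- assume previous lemmas; test core computation standalone with axioms
lemma int_rpow {p : ℝ} (hp : 1 < p) (a b : ℝ) :
    ∫ t in a..b, t^(p-1) = (b^p - a^p)/p := by
  rw [integral_rpow (Or.inl (by linarith))]
  rw [show p - 1 + 1 = p by ring]

lemma int_lin (a b K : ℝ) : ∫ t in a..b, K * (t - a) = K * ((b-a)^2/2) := by
  rw [intervalIntegral.integral_const_mul]
  rw [intervalIntegral.integral_sub intervalIntegral.intervalIntegrable_id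
    intervalIntegrable_const]
  rw [integral_id, intervalIntegral.integral_const, smul_eq_mul]
  ring

lemma int_lin2 (a b K : ℝ) : ∫ t in a..b, K * (b - t) = K * ((b-a)^2/2) := by
  rw [intervalIntegral.integral_const_mul]
  rw [intervalIntegral.integral_sub intervalIntegrable_const
    intervalIntegral.intervalIntegrable_id]
  rw [integral_id, intervalIntegral.integral_const, smul_eq_mul]
  ring

lemma F1_int {p : ℝ} (hp : 1 < p) (a b : ℝ) :
    b^p - a^p - p*a^(p-1)*(b-a) = p * ∫ t in a..b, (t^(p-1) - a^(p-1)) := by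
  have hcont : Continuous fun t:ℝ => t^(p-1) := continuous_rpow_const (by linarith)
  rw [intervalIntegral.integral_sub (hcont.intervalIntegrable _ _) intervalIntegrable_const]
  rw [int_rpow hp, intervalIntegral.integral_const, smul_eq_mul]
  field_simp

/-- Core two-sided bound when `b/2 ≤ a ≤ b`. -/
lemma core1 {p a b : ℝ} (hp : 1 < p) (hb : 0 < b) (h1 : b/2 ≤ a) (h2 : a ≤ b) :
    p * ((p-1) * min 1 (2^(2-p))) / 2 * ((b-a)^2 * b^(p-2)) ≤
      b^p - a^p - p*a^(p-1)*(b-a) ∧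
    b^p - a^p - p*a^(p-1)*(b-a) ≤ p * ((p-1) * max 1 (2^(2-p))) / 2 * ((b-a)^2 * b^(p-2)) := by
  have hcont : Continuous fun t:ℝ => t^(p-1) - a^(p-1) :=
    (continuous_rpow_const (by linarith)).sub continuous_const
  have hK1 : Continuous fun t:ℝ => (p-1) * min 1 (2^(2-p)) * b^(p-2) * (t - a) := by continuity
  have hK2 : Continuous fun t:ℝ => (p-1) * max 1 (2^(2-p)) * b^(p-2) * (t - a) := by continuity
  have hlow := intervalIntegral.integral_mono_on (μ := MeasureTheory.volume) h2
    (hK1.intervalIntegrable _ _) (hcont.intervalIntegrable _ _)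
    (fun t ht => (ptwise1 hp hb h1 ht.1 ht.2).1)
  have hup := intervalIntegral.integral_mono_on (μ := MeasureTheory.volume) h2
    (hcont.intervalIntegrable _ _) (hK2.intervalIntegrable _ _)
    (fun t ht => (ptwise1 hp hb h1 ht.1 ht.2).2)
  rw [int_lin] at hlow hup
  have heq := F1_int hp a b
  constructor
  · nlinarith [mul_le_mul_of_nonneg_left hlow (by linarith : (0:ℝ) ≤ p)]
  · nlinarith [mul_le_mul_of_nonneg_left hup (by linarith : (0:ℝ) ≤ p)]

/-- Core two-sided bound when `a/2 ≤ b ≤ a`. -/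
lemma core2 {p a b : ℝ} (hp : 1 < p) (ha : 0 < a) (h1 : a/2 ≤ b) (h2 : b ≤ a) :
    p * ((p-1) * min 1 (2^(2-p))) / 2 * ((a-b)^2 * a^(p-2)) ≤
      b^p - a^p - p*a^(p-1)*(b-a) ∧
    b^p - a^p - p*a^(p-1)*(b-a) ≤ p * ((p-1) * max 1 (2^(2-p))) / 2 * ((a-b)^2 * a^(p-2)) := by
  have hcont : Continuous fun t:ℝ => a^(p-1) - t^(p-1) :=
    continuous_const.sub (continuous_rpow_const (by linarith))
  have hK1 : Continuous fun t:ℝ => (p-1) * min 1 (2^(2-p)) * a^(p-2) * (a - t) := by continuity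
  have hK2 : Continuous fun t:ℝ => (p-1) * max 1 (2^(2-p)) * a^(p-2) * (a - t) := by continuity
  have hlow := intervalIntegral.integral_mono_on (μ := MeasureTheory.volume) h2
    (hK1.intervalIntegrable _ _) (hcont.intervalIntegrable _ _)
    (fun t ht => (ptwise2 hp ha h1 ht.1 ht.2).1)
  have hup := intervalIntegral.integral_mono_on (μ := MeasureTheory.volume) h2
    (hcont.intervalIntegrable _ _) (hK2.intervalIntegrable _ _)
    (fun t ht => (ptwise2 hp ha h1 ht.1 ht.2).2)
  rw [int_lin2] at hlow hup
  have heq : b^p - a^p - p*a^(p-1)*(b-a) = p * ∫ t in b..a, (a^(p-1) - t^(p-1)) := by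
    have hc2 : Continuous fun t:ℝ => t^(p-1) := continuous_rpow_const (by linarith)
    rw [intervalIntegral.integral_sub intervalIntegrable_const (hc2.intervalIntegrable _ _)]
    rw [int_rpow hp, intervalIntegral.integral_const, smul_eq_mul]
    field_simp
    ring
  constructor
  · nlinarith [mul_le_mul_of_nonneg_left hlow (by linarith : (0:ℝ) ≤ p)]
  · nlinarith [mul_le_mul_of_nonneg_left hup (by linarith : (0:ℝ) ≤ p)]

lemma breg_nonneg {p x y : ℝ} (hp : 1 < p) (hx : 0 ≤ x) (hy : 0 ≤ y) :
    x^p + p*x^(p-1)*(y-x) ≤ y^p := by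
  obtain rfl | hx' := hx.eq_or_lt
  · rw [zero_rpow (by linarith : p ≠ 0), zero_rpow (by intro h; linarith [h] : p - 1 ≠ 0)]
    simpa using rpow_nonneg hy p
  · exact bern_ge hp.le hy hx'

lemma sq_mul_rpow {x p : ℝ} (hx : 0 < x) : x^p = x^2 * x^(p-2) := by
  have h : ((2:ℕ):ℝ) + (p-2) = p := by push_cast; ring
  rw [← Real.rpow_natCast x 2, ← Real.rpow_add hx, h]

lemma rpow_succ' {x p : ℝ} (hx : x ≠ 0) : x^(p-1) * x = x^p := by
  have := Real.rpow_add_one hx (p-1)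
  rw [show p - 1 + 1 = p by ring] at this
  exact this.symm

lemma P1 {p a b : ℝ} (hp : 1 < p) (ha : 0 ≤ a) (hb : 0 ≤ b) :
    p * ((p-1) * min 1 (2^(2-p))) / 8 * ((b-a)^2 * (max a b)^(p-2)) ≤
      b^p - a^p - p*a^(p-1)*(b-a) ∧
    b^p - a^p - p*a^(p-1)*(b-a) ≤
      (p * ((p-1) * max 1 (2^(2-p))) / 2 + 4*(1+p)) * ((b-a)^2 * (max a b)^(p-2)) := by
  have hminpos : (0:ℝ) < min 1 (2^(2-p)) := lt_min one_pos (rpow_pos_of_pos two_pos _)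
  have hmaxpos : (0:ℝ) < max 1 (2^(2-p)) := lt_of_lt_of_le one_pos (le_max_left _ _)
  have hK1 : (0:ℝ) ≤ p * ((p-1) * min 1 (2^(2-p))) :=
    mul_nonneg (by linarith) (mul_nonneg (by linarith) hminpos.le)
  have hK2 : (0:ℝ) ≤ p * ((p-1) * max 1 (2^(2-p))) :=
    mul_nonneg (by linarith) (mul_nonneg (by linarith) hmaxpos.le)
  rcases lt_trichotomy a b with hab | rfl | hab
  · -- a < b
    have hb0 : 0 < b := lt_of_le_of_lt ha hab
    have hbp : 0 ≤ b^(p-2) := rpow_nonneg hb0.le _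
    rw [max_eq_right hab.le]
    have X0 : 0 ≤ (b-a)^2 * b^(p-2) := mul_nonneg (sq_nonneg _) hbp
    rcases le_or_gt (b/2) a with hcore | hfar
    · obtain ⟨l, u⟩ := core1 hp hb0 hcore hab.le
      constructor
      · linarith [l, mul_nonneg hK1 X0]
      · linarith [u, mul_nonneg (by linarith : (0:ℝ) ≤ 4*(1+p)) X0]
    · -- far case: a < b/2
      constructor
      · -- lower
        have h0 := breg_nonneg hp ha (by linarith : (0:ℝ) ≤ b/2)
        have h1 : a^(p-1) ≤ (b/2)^(p-1) := rpow_le_rpow ha (by linarith) (by linarith)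
        have h1s : p*(b/2)*a^(p-1) ≤ p*(b/2)*(b/2)^(p-1) :=
          mul_le_mul_of_nonneg_left h1 (by positivity)
        have hc := (core1 hp hb0 (le_refl (b/2)) (by linarith)).1
        have hsq : (b-a)^2 * b^(p-2) ≤ b^2 * b^(p-2) :=
          mul_le_mul_of_nonneg_right
            (by linarith [mul_nonneg ha (show (0:ℝ) ≤ 2*b-a by linarith)]) hbp
        have hsqs := mul_le_mul_of_nonneg_left hsq (by linarith : (0:ℝ) ≤ p * ((p-1) * min 1 (2^(2-p))) / 8)
        linarith [hc, h0, h1s, hsqs]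
      · -- upper
        have t1 : 0 ≤ a^p := rpow_nonneg ha _
        have t2 : 0 ≤ p*a^(p-1)*(b-a) :=
          mul_nonneg (mul_nonneg (by linarith) (rpow_nonneg ha _)) (by linarith)
        have hbsq : b^p = b^2 * b^(p-2) := sq_mul_rpow hb0
        have hsq : b^2 * b^(p-2) ≤ 4*((b-a)^2 * b^(p-2)) := by
          rw [show 4*((b-a)^2 * b^(p-2)) = (4*(b-a)^2) * b^(p-2) by ring]
          have e1 : (0:ℝ) ≤ b-2*a := by linarith
          have e2 : (0:ℝ) ≤ 3*b-2*a := by linarith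
          exact mul_le_mul_of_nonneg_right (by linarith [mul_nonneg e1 e2]) hbp
        linarith [hsq, mul_nonneg hK2 X0, mul_nonneg (by linarith : (0:ℝ) ≤ 4*p) X0]
  · -- a = b
    constructor <;> simp
  · -- b < a
    have ha0 : 0 < a := lt_of_le_of_lt hb hab
    have hap : 0 ≤ a^(p-2) := rpow_nonneg ha0.le _
    rw [max_eq_left hab.le]
    have X0 : 0 ≤ (b-a)^2 * a^(p-2) := mul_nonneg (sq_nonneg _) hap
    rcases le_or_gt (a/2) b with hcore | hfar
    · obtain ⟨l, u⟩ := core2 hp ha0 hcore hab.le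
      rw [show (a-b)^2 = (b-a)^2 by ring] at l u
      constructor
      · linarith [l, mul_nonneg hK1 X0]
      · linarith [u, mul_nonneg (by linarith : (0:ℝ) ≤ 4*(1+p)) X0]
    · -- far: b < a/2
      have hd : 0 < a - b := by linarith
      constructor
      · -- lower via convexity
        obtain ⟨lam, hlam0, hlam1, key⟩ :
            ∃ l : ℝ, 0 ≤ l ∧ l ≤ 1 ∧ l*(a-b) = a/2 :=
          ⟨(a/2)/(a-b), by positivity, by rw [div_le_one hd]; linarith,
            by field_simp⟩
        have hcvx := (convexOn_rpow hp.le).2 (Set.mem_Ici.2 hb) (Set.mem_Ici.2 ha0.le)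
          hlam0 (by linarith : (0:ℝ) ≤ 1 - lam) (by ring)
        simp only [smul_eq_mul] at hcvx
        have harg : lam*b + (1-lam)*a = a/2 := by linarith [key]
        rw [harg] at hcvx
        -- hcvx : (a/2)^p ≤ lam*b^p + (1-lam)*a^p
        have key2 : p*a^(p-1)*(lam*(a-b)) = p*a^(p-1)*(a/2) := by rw [key]
        have hstep : (a/2)^p - a^p - p*a^(p-1)*(a/2-a) ≤
            lam * (b^p - a^p - p*a^(p-1)*(b-a)) := by linarith [hcvx, key2]
        have hF1nn : 0 ≤ b^p - a^p - p*a^(p-1)*(b-a) := by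
          have := breg_nonneg hp ha0.le hb
          linarith
        have hlamF : lam * (b^p - a^p - p*a^(p-1)*(b-a)) ≤ b^p - a^p - p*a^(p-1)*(b-a) := by
          linarith [mul_nonneg (by linarith : (0:ℝ) ≤ 1 - lam) hF1nn]
        have hc := (core2 (b := a/2) hp ha0 (le_refl (a/2)) (by linarith)).1
        have hsq : (b-a)^2 * a^(p-2) ≤ a^2 * a^(p-2) :=
          mul_le_mul_of_nonneg_right
            (by linarith [mul_nonneg hb (show (0:ℝ) ≤ 2*a-b by linarith)]) hap
        have hsqs := mul_le_mul_of_nonneg_left hsq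
          (by linarith : (0:ℝ) ≤ p * ((p-1) * min 1 (2^(2-p))) / 8)
        linarith [hc, hstep, hlamF, hsqs]
      · -- upper
        have hba : b^p ≤ a^p := rpow_le_rpow hb hab.le (by linarith)
        have hap1 : 0 ≤ p*a^(p-1) := mul_nonneg (by linarith) (rpow_nonneg ha0.le _)
        have hs1 : a^(p-1)*a = a^p := rpow_succ' ha0.ne'
        have hsub : p*a^(p-1)*(a-b) ≤ p*a^p := by
          calc p*a^(p-1)*(a-b) ≤ p*a^(p-1)*a :=
                mul_le_mul_of_nonneg_left (by linarith) hap1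
            _ = p*a^p := by rw [mul_assoc, hs1]
        have hasq : p*a^p = p*(a^2 * a^(p-2)) := by rw [← sq_mul_rpow ha0]
        have hsq : a^2 * a^(p-2) ≤ 4*((b-a)^2 * a^(p-2)) := by
          rw [show 4*((b-a)^2 * a^(p-2)) = (4*(b-a)^2) * a^(p-2) by ring]
          have e1 : (0:ℝ) ≤ a-2*b := by linarith
          have e2 : (0:ℝ) ≤ 3*a-2*b := by linarith
          exact mul_le_mul_of_nonneg_right (by linarith [mul_nonneg e1 e2]) hap
        have hpa : p*(a^2*a^(p-2)) ≤ p*(4*((b-a)^2*a^(p-2))) :=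
          mul_le_mul_of_nonneg_left hsq (by linarith)
        linarith [hba, hsub, hasq, hpa, mul_nonneg hK2 X0,
          mul_nonneg (by linarith : (0:ℝ) ≤ 4) X0]

lemma P2 {p a b : ℝ} (hp : 1 < p) (ha : 0 ≤ a) (hb : 0 ≤ b) :
    min 1 (p-1)/4 * ((a+b)^2 * (max a b)^(p-2)) ≤ b^p - a^p + p*a^(p-1)*(b+a) ∧
    b^p - a^p + p*a^(p-1)*(b+a) ≤ 2*p * ((a+b)^2 * (max a b)^(p-2)) := by
  have m0 : (0:ℝ) < min 1 (p-1) := lt_min one_pos (by linarith)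
  obtain rfl | ha0 := ha.eq_or_lt
  · -- a = 0
    have hz1 : (0:ℝ)^(p-1) = 0 := zero_rpow (by intro h; linarith [sub_eq_zero.1 h])
    have hz2 : (0:ℝ)^p = 0 := zero_rpow (by linarith)
    rw [hz1, hz2]
    have hM : max (0:ℝ) b = b := max_eq_right hb
    rw [hM]
    obtain rfl | hb0 := hb.eq_or_lt
    · have hz : (0:ℝ)^p = 0 := zero_rpow (by linarith)
      constructor <;> simp [hz]
    · have hbp : b^p = b^2 * b^(p-2) := sq_mul_rpow hb0
      have hbp0 : 0 ≤ b^p := rpow_nonneg hb _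
      constructor
      · have : min 1 (p-1)/4 * ((0+b)^2 * b^(p-2)) ≤ 1/4 * ((0+b)^2*b^(p-2)) := by
          apply mul_le_mul_of_nonneg_right _ (mul_nonneg (sq_nonneg _) (rpow_nonneg hb _))
          have := min_le_left (1:ℝ) (p-1); linarith
        nlinarith [this, hbp]
      · nlinarith [hbp, hbp0]
  · -- a > 0
    have hM0 : (0:ℝ) < max a b := lt_of_lt_of_le ha0 (le_max_left _ _)
    have hMp : (max a b)^p = (max a b)^2 * (max a b)^(p-2) := sq_mul_rpow hM0
    have hM2 : 0 ≤ (max a b)^(p-2) := rpow_nonneg hM0.le _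
    have hs1 : a^(p-1)*a = a^p := rpow_succ' ha0.ne'
    have hs : a^(p-1)*(b+a) = a^(p-1)*b + a^p := by rw [mul_add, hs1]
    have hs' : p*(a^(p-1)*(b+a)) = p*(a^(p-1)*b) + p*a^p := by rw [hs]; ring
    have hbM : b^p ≤ (max a b)^p := rpow_le_rpow hb (le_max_right _ _) (by linarith)
    have haM : a^p ≤ (max a b)^p := rpow_le_rpow ha (le_max_left _ _) (by linarith)
    have habM : a^(p-1)*b ≤ (max a b)^p := by
      have h1 : a^(p-1) ≤ (max a b)^(p-1) := rpow_le_rpow ha (le_max_left _ _) (by linarith)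
      have h2 : a^(p-1)*b ≤ (max a b)^(p-1)*(max a b) :=
        mul_le_mul h1 (le_max_right _ _) hb (rpow_nonneg hM0.le _)
      rwa [rpow_succ' hM0.ne'] at h2
    have hMF : (max a b)^p ≤ a^p + b^p := by
      rcases le_total a b with h | h
      · rw [max_eq_right h]; linarith [rpow_nonneg ha p]
      · rw [max_eq_left h]; linarith [rpow_nonneg hb p]
    have hMle : max a b ≤ a + b := by
      rcases le_total a b with h | h
      · rw [max_eq_right h]; linarith
      · rw [max_eq_left h]; linarith
    have hle2 : a + b ≤ 2 * max a b := by
      have := le_max_left a b; have := le_max_right a b; linarith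
    have hG1 : (max a b)^2 * (max a b)^(p-2) ≤ (a+b)^2 * (max a b)^(p-2) := by
      apply mul_le_mul_of_nonneg_right _ hM2
      nlinarith [hM0.le, hMle]
    have hG2 : (a+b)^2 * (max a b)^(p-2) ≤ 4*((max a b)^2 * (max a b)^(p-2)) := by
      rw [show 4*((max a b)^2 * (max a b)^(p-2)) = (4*(max a b)^2) * (max a b)^(p-2) by ring]
      apply mul_le_mul_of_nonneg_right _ hM2
      nlinarith [hle2, add_nonneg ha hb]
    constructor
    · have l1 : min 1 (p-1)/4 * ((a+b)^2*(max a b)^(p-2)) ≤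
          min 1 (p-1)/4 * (4*((max a b)^2 * (max a b)^(p-2))) :=
        mul_le_mul_of_nonneg_left hG2 (by linarith)
      have l2 : min 1 (p-1) * ((max a b)^2*(max a b)^(p-2)) ≤ min 1 (p-1) * (a^p + b^p) := by
        apply mul_le_mul_of_nonneg_left _ m0.le
        rw [← hMp]; exact hMF
      have l3 : min 1 (p-1) * a^p ≤ (p-1) * a^p :=
        mul_le_mul_of_nonneg_right (min_le_right _ _) (rpow_nonneg ha _)
      have l4 : min 1 (p-1) * b^p ≤ 1 * b^p :=
        mul_le_mul_of_nonneg_right (min_le_left _ _) (rpow_nonneg hb _)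
      have l5 : 0 ≤ p * (a^(p-1)*b) :=
        mul_nonneg (by linarith) (mul_nonneg (rpow_nonneg ha _) hb)
      linarith [l1, l2, l3, l4, l5, hs']
    · have u1 : p*(a^(p-1)*b) ≤ p*(max a b)^p := mul_le_mul_of_nonneg_left habM (by linarith)
      have u2 : (p-1)*a^p ≤ (p-1)*(max a b)^p := mul_le_mul_of_nonneg_left haM (by linarith)
      have u3 : 2*p*((max a b)^2*(max a b)^(p-2)) ≤ 2*p*((a+b)^2*(max a b)^(p-2)) :=
        mul_le_mul_of_nonneg_left hG1 (by linarith)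
      have u4 : 2*p*(max a b)^p = 2*p*((max a b)^2*(max a b)^(p-2)) := by rw [hMp]
      linarith [hbM, u1, u2, u3, u4, hs']

set_option maxHeartbeats 2000000 in
lemma scalar_key (p : ℝ) (hp : 1 < p) :
    ∃ c C : ℝ, 0 < c ∧ c ≤ C ∧ ∀ a b s : ℝ, 0 ≤ a → 0 ≤ b → |s| ≤ a * b →
      c * ((a^2 + b^2 - 2*s) * (max a b)^(p-2)) ≤ b^p - a^p - p * a^(p-2) * (s - a^2) ∧
      b^p - a^p - p * a^(p-2) * (s - a^2) ≤ C * ((a^2 + b^2 - 2*s) * (max a b)^(p-2)) := by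
  have hminpos : (0:ℝ) < min 1 (2^(2-p)) := lt_min one_pos (rpow_pos_of_pos two_pos _)
  have hmaxpos : (0:ℝ) < max 1 (2^(2-p)) := lt_of_lt_of_le one_pos (le_max_left _ _)
  have m0 : (0:ℝ) < min 1 (p-1) := lt_min one_pos (by linarith)
  have m1 : min (1:ℝ) (p-1) ≤ 1 := min_le_left _ _
  have hc1pos : 0 < p * ((p-1) * min 1 (2^(2-p))) / 8 := by
    have h1 : (0:ℝ) < p := by linarith
    have h2 : (0:ℝ) < p - 1 := by linarith
    positivity
  have hC1pos : 0 < p * ((p-1) * max 1 (2^(2-p))) / 2 + 4*(1+p) := by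
    have : 0 ≤ p * ((p-1) * max 1 (2^(2-p))) / 2 := by
      have h2 : (0:ℝ) ≤ p - 1 := by linarith
      positivity
    linarith
  refine ⟨min (p * ((p-1) * min 1 (2^(2-p))) / 8) (min 1 (p-1)/4),
    (p * ((p-1) * max 1 (2^(2-p))) / 2 + 4*(1+p)) + 2*p,
    lt_min hc1pos (by linarith), ?_, ?_⟩
  · calc min (p * ((p-1) * min 1 (2^(2-p))) / 8) (min 1 (p-1)/4) ≤ min 1 (p-1)/4 :=
        min_le_right _ _
      _ ≤ (p * ((p-1) * max 1 (2^(2-p))) / 2 + 4*(1+p)) + 2*p := by linarith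
  intro a b s ha hb hs
  have hcc1 : min (p * ((p-1) * min 1 (2^(2-p))) / 8) (min 1 (p-1)/4) ≤
      p * ((p-1) * min 1 (2^(2-p))) / 8 := min_le_left _ _
  have hcc2 : min (p * ((p-1) * min 1 (2^(2-p))) / 8) (min 1 (p-1)/4) ≤
      min 1 (p-1)/4 := min_le_right _ _
  have hC1C : p * ((p-1) * max 1 (2^(2-p))) / 2 + 4*(1+p) ≤
      (p * ((p-1) * max 1 (2^(2-p))) / 2 + 4*(1+p)) + 2*p := by linarith
  have h2pC : 2*p ≤ (p * ((p-1) * max 1 (2^(2-p))) / 2 + 4*(1+p)) + 2*p := by linarith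
  have habs := abs_le.1 hs
  have hz1 : (0:ℝ)^(p-1) = 0 := zero_rpow (by intro h; linarith [sub_eq_zero.1 h])
  have hz2 : (0:ℝ)^p = 0 := zero_rpow (by linarith)
  obtain rfl | ha0 := ha.eq_or_lt
  · -- a = 0 : s = 0
    have hs0 : s = 0 := by
      have h0 : (0:ℝ)*b = 0 := zero_mul b
      have h1 := habs.1; have h2 := habs.2
      linarith
    subst hs0
    rw [hz2]
    have hzero : (0:ℝ) - (0:ℝ)^2 = 0 := by norm_num
    rw [hzero, mul_zero]
    obtain ⟨l, u⟩ := P1 (a := (0:ℝ)) (b := b) hp le_rfl hb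
    rw [hz1, hz2] at l u
    have X0 : 0 ≤ (b-0)^2*(max (0:ℝ) b)^(p-2) :=
      mul_nonneg (sq_nonneg _) (rpow_nonneg (le_max_left 0 b) _)
    constructor
    · linarith [l, mul_le_mul_of_nonneg_right hcc1 X0]
    · linarith [u, mul_le_mul_of_nonneg_right hC1C X0]
  · obtain rfl | hb0 := hb.eq_or_lt
    · -- b = 0 : s = 0
      have hs0 : s = 0 := by
        have h0 : a*(0:ℝ) = 0 := mul_zero a
        have h1 := habs.1; have h2 := habs.2
        linarith
      subst hs0
      rw [hz2]
      have ea : a^p = a^2*a^(p-2) := sq_mul_rpow ha0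
      have e2 : p*a^(p-2)*((0:ℝ) - a^2) = -(p*a^p) := by rw [ea]; ring
      obtain ⟨l, u⟩ := P1 (a := a) (b := (0:ℝ)) hp ha0.le le_rfl
      rw [hz2] at l u
      have hs1 : a^(p-1)*a = a^p := rpow_succ' ha0.ne'
      have e3 : p*a^(p-1)*((0:ℝ)-a) = -(p*a^p) := by rw [← hs1]; ring
      have X0 : 0 ≤ ((0:ℝ)-a)^2*(max a (0:ℝ))^(p-2) :=
        mul_nonneg (sq_nonneg _) (rpow_nonneg (le_max_of_le_left ha0.le) _)
      constructor
      · linarith [l, mul_le_mul_of_nonneg_right hcc1 X0, e2, e3]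
      · linarith [u, mul_le_mul_of_nonneg_right hC1C X0, e2, e3]
    · -- a, b > 0
      have e1 : a^(p-1) = a^(p-2)*a := by
        rw [show p-1 = (p-2)+1 by ring, Real.rpow_add_one ha0.ne']
      obtain ⟨l1, u1⟩ := P1 hp ha0.le hb0.le
      obtain ⟨l2, u2⟩ := P2 hp ha0.le hb0.le
      rw [e1] at l1 u1 l2 u2
      have hMnn : (0:ℝ) ≤ (max a b)^(p-2) :=
        rpow_nonneg (le_trans ha0.le (le_max_left a b)) _
      have X1 : 0 ≤ (b-a)^2*(max a b)^(p-2) := mul_nonneg (sq_nonneg _) hMnn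
      have X2 : 0 ≤ (a+b)^2*(max a b)^(p-2) := mul_nonneg (sq_nonneg _) hMnn
      have g1 : 0 ≤ (b^p - a^p - p*(a^(p-2)*a)*(b-a)) -
          min (p * ((p-1) * min 1 (2^(2-p))) / 8) (min 1 (p-1)/4)*((b-a)^2*(max a b)^(p-2)) := by
        have := mul_le_mul_of_nonneg_right hcc1 X1
        linarith [l1]
      have g2 : 0 ≤ (b^p - a^p + p*(a^(p-2)*a)*(b+a)) -
          min (p * ((p-1) * min 1 (2^(2-p))) / 8) (min 1 (p-1)/4)*((a+b)^2*(max a b)^(p-2)) := by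
        have := mul_le_mul_of_nonneg_right hcc2 X2
        linarith [l2]
      have g1' : 0 ≤ ((p * ((p-1) * max 1 (2^(2-p))) / 2 + 4*(1+p)) + 2*p)*((b-a)^2*(max a b)^(p-2))
          - (b^p - a^p - p*(a^(p-2)*a)*(b-a)) := by
        have := mul_le_mul_of_nonneg_right hC1C X1
        linarith [u1]
      have g2' : 0 ≤ ((p * ((p-1) * max 1 (2^(2-p))) / 2 + 4*(1+p)) + 2*p)*((a+b)^2*(max a b)^(p-2))
          - (b^p - a^p + p*(a^(p-2)*a)*(b+a)) := by
        have := mul_le_mul_of_nonneg_right h2pC X2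
        linarith [u2]
      have hs1' : 0 ≤ a*b - s := by linarith [habs.2]
      have hs2' : 0 ≤ a*b + s := by linarith [habs.1]
      have habpos : 0 < a*b := mul_pos ha0 hb0
      have h2ab : (0:ℝ) < 2*(a*b) := by linarith
      constructor
      · have hsum : 0 ≤ 2*(a*b) * ((b^p - a^p - p*a^(p-2)*(s-a^2)) -
            min (p * ((p-1) * min 1 (2^(2-p))) / 8) (min 1 (p-1)/4) *
              ((a^2+b^2-2*s)*(max a b)^(p-2))) := by
          have h1 := mul_nonneg hs2' g1
          have h2 := mul_nonneg hs1' g2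
          linarith [h1, h2]
        have := (mul_nonneg_iff_of_pos_left h2ab).1 hsum
        linarith
      · have hsum : 0 ≤ 2*(a*b) * (((p * ((p-1) * max 1 (2^(2-p))) / 2 + 4*(1+p)) + 2*p) *
            ((a^2+b^2-2*s)*(max a b)^(p-2)) - (b^p - a^p - p*a^(p-2)*(s-a^2))) := by
          have h1 := mul_nonneg hs2' g1'
          have h2 := mul_nonneg hs1' g2'
          linarith [h1, h2]
        have := (mul_nonneg_iff_of_pos_left h2ab).1 hsum
        linarith

noncomputable def bregmanF (n : ℕ) (p : ℝ) (w z : EuclideanSpace ℝ (Fin n)) : ℝ :=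
  ‖z‖ ^ p - ‖w‖ ^ p - p * ‖w‖ ^ (p - 2) * (inner ℝ w (z - w) : ℝ)

noncomputable def bregmanG (n : ℕ) (p : ℝ) (w z : EuclideanSpace ℝ (Fin n)) : ℝ :=
  ‖z - w‖ ^ 2 * (max ‖w‖ ‖z‖) ^ (p - 2)

theorem bregman_comparable (n : ℕ) (p : ℝ) (hp : 1 < p) :
    ∃ c C : ℝ, 0 < c ∧ c ≤ C ∧
      ∀ w z : EuclideanSpace ℝ (Fin n),
        c * bregmanG n p w z ≤ bregmanF n p w z ∧
        bregmanF n p w z ≤ C * bregmanG n p w z := by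
  obtain ⟨c, C, hc, hcC, h⟩ := scalar_key p hp
  refine ⟨c, C, hc, hcC, fun w z => ?_⟩
  have key := h ‖w‖ ‖z‖ (inner ℝ w z) (norm_nonneg w) (norm_nonneg z)
    (abs_real_inner_le_norm w z)
  have hF : bregmanF n p w z =
      ‖z‖^p - ‖w‖^p - p*‖w‖^(p-2)*((inner ℝ w z : ℝ) - ‖w‖^2) := by
    unfold bregmanF
    rw [inner_sub_right, real_inner_self_eq_norm_sq]
  have hG : bregmanG n p w z =
      (‖w‖^2 + ‖z‖^2 - 2*(inner ℝ w z : ℝ)) * (max ‖w‖ ‖z‖)^(p-2) := by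
    unfold bregmanG
    rw [norm_sub_sq_real, real_inner_comm]
    ring
  rw [hF, hG]
  exact key
end

section
/- For p ≥ 2, the function Y(z₁, z₂) := z₁ z₂^{p-1} + (z₁² + z₂²)^{p/2} is convex on [0,∞)². -/
open Set Filter Topology

noncomputable def Yfun (p : ℝ) (z : ℝ × ℝ) : ℝ :=
  z.1 * z.2 ^ (p - 1) + Real.sqrt (z.1 ^ 2 + z.2 ^ 2) ^ p

section aux

private lemma Yfun_eq (p : ℝ) :
    Yfun p = fun z : ℝ × ℝ => z.1 * z.2 ^ (p - 1) + (z.1 ^ 2 + z.2 ^ 2) ^ (p / 2) := by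
  funext z
  unfold Yfun
  congr 1
  rw [Real.sqrt_eq_rpow, ← Real.rpow_mul (by positivity)]
  ring_nf

private lemma Yfun_cont (p : ℝ) (hp : 2 ≤ p) : Continuous (Yfun p) := by
  unfold Yfun
  have h1 : Continuous fun w : ℝ => w ^ (p - 1) :=
    continuous_iff_continuousAt.mpr fun w =>
      Real.continuousAt_rpow_const w _ (Or.inr (by linarith))
  have h2 : Continuous fun w : ℝ => w ^ p :=
    continuous_iff_continuousAt.mpr fun w =>
      Real.continuousAt_rpow_const w _ (Or.inr (by linarith))
  exact (continuous_fst.mul (h1.comp continuous_snd)).add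
    (h2.comp (((continuous_fst.pow 2).add (continuous_snd.pow 2)).sqrt))

private lemma key_rpow_le (p u v : ℝ) (hp : 2 ≤ p) (hv : 0 < v) :
    v ^ (p - 2) ≤ (u ^ 2 + v ^ 2) ^ (p / 2 - 1) := by
  have h1 : v ^ (p - 2) = (v ^ 2) ^ (p / 2 - 1) := by
    rw [← Real.rpow_natCast v 2, ← Real.rpow_mul hv.le]
    ring_nf
  rw [h1]
  exact Real.rpow_le_rpow (by positivity) (by nlinarith [sq_nonneg u]) (by linarith)

variable (p c1 c2 a1 b1 : ℝ)

private noncomputable def Ut (t : ℝ) : ℝ := c1 + t * a1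
private noncomputable def Vt (t : ℝ) : ℝ := c2 + t * b1

private noncomputable def G0 (t : ℝ) : ℝ :=
  Ut c1 a1 t * Vt c2 b1 t ^ (p - 1) + (Ut c1 a1 t ^ 2 + Vt c2 b1 t ^ 2) ^ (p / 2)

private noncomputable def G1 (t : ℝ) : ℝ :=
  a1 * Vt c2 b1 t ^ (p - 1) + Ut c1 a1 t * (b1 * (p - 1) * Vt c2 b1 t ^ (p - 2))
    + (2 * Ut c1 a1 t * a1 + 2 * Vt c2 b1 t * b1) * (p / 2)
      * (Ut c1 a1 t ^ 2 + Vt c2 b1 t ^ 2) ^ (p / 2 - 1)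

private noncomputable def G2 (t : ℝ) : ℝ :=
  b1 * (p - 1) * Vt c2 b1 t ^ (p - 2) * a1
    + (a1 * (b1 * (p - 1) * Vt c2 b1 t ^ (p - 2))
      + Ut c1 a1 t * (b1 * (p - 1) * (b1 * (p - 2) * Vt c2 b1 t ^ (p - 3))))
    + ((2 * a1 * a1 + 2 * b1 * b1) * (p / 2)
        * (Ut c1 a1 t ^ 2 + Vt c2 b1 t ^ 2) ^ (p / 2 - 1)
      + (2 * Ut c1 a1 t * a1 + 2 * Vt c2 b1 t * b1) * (p / 2)
        * ((2 * Ut c1 a1 t * a1 + 2 * Vt c2 b1 t * b1) * (p / 2 - 1)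
          * (Ut c1 a1 t ^ 2 + Vt c2 b1 t ^ 2) ^ (p / 2 - 2)))

variable {p c1 c2 a1 b1 : ℝ}

private lemma hUt (t : ℝ) : HasDerivAt (Ut c1 a1) a1 t := by
  show HasDerivAt (fun t => c1 + t * a1) a1 t
  simpa using ((hasDerivAt_id t).mul_const a1).const_add c1

private lemma hVt (t : ℝ) : HasDerivAt (Vt c2 b1) b1 t := by
  show HasDerivAt (fun t => c2 + t * b1) b1 t
  simpa using ((hasDerivAt_id t).mul_const b1).const_add c2

private lemma hSt (t : ℝ) :
    HasDerivAt (fun t => Ut c1 a1 t ^ 2 + Vt c2 b1 t ^ 2)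
      (2 * Ut c1 a1 t * a1 + 2 * Vt c2 b1 t * b1) t := by
  have := ((hUt (c1 := c1) (a1 := a1) t).pow 2).add ((hVt (c2 := c2) (b1 := b1) t).pow 2)
  refine this.congr_deriv ?_
  push_cast
  ring

private lemma hG0 {t : ℝ} (hv : 0 < Vt c2 b1 t)
    (hs : 0 < Ut c1 a1 t ^ 2 + Vt c2 b1 t ^ 2) :
    HasDerivAt (G0 p c1 c2 a1 b1) (G1 p c1 c2 a1 b1 t) t := by
  have h1 : HasDerivAt (fun t => Vt c2 b1 t ^ (p - 1))
      (b1 * (p - 1) * Vt c2 b1 t ^ (p - 2)) t := by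
    have := (hVt (c2 := c2) (b1 := b1) t).rpow_const (p := p - 1) (Or.inl hv.ne')
    convert this using 2
    ring_nf
  have h2 := (hUt (c1 := c1) (a1 := a1) t).mul h1
  have h3 : HasDerivAt (fun t => (Ut c1 a1 t ^ 2 + Vt c2 b1 t ^ 2) ^ (p / 2))
      ((2 * Ut c1 a1 t * a1 + 2 * Vt c2 b1 t * b1) * (p / 2)
        * (Ut c1 a1 t ^ 2 + Vt c2 b1 t ^ 2) ^ (p / 2 - 1)) t :=
    (hSt t).rpow_const (Or.inl hs.ne')
  have := h2.add h3
  exact this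

private lemma hG1 {t : ℝ} (hv : 0 < Vt c2 b1 t)
    (hs : 0 < Ut c1 a1 t ^ 2 + Vt c2 b1 t ^ 2) :
    HasDerivAt (G1 p c1 c2 a1 b1) (G2 p c1 c2 a1 b1 t) t := by
  have hda : HasDerivAt (fun t => Vt c2 b1 t ^ (p - 1))
      (b1 * (p - 1) * Vt c2 b1 t ^ (p - 2)) t := by
    have := (hVt (c2 := c2) (b1 := b1) t).rpow_const (p := p - 1) (Or.inl hv.ne')
    convert this using 2; ring_nf
  have hdb : HasDerivAt (fun t => Vt c2 b1 t ^ (p - 2))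
      (b1 * (p - 2) * Vt c2 b1 t ^ (p - 3)) t := by
    have := (hVt (c2 := c2) (b1 := b1) t).rpow_const (p := p - 2) (Or.inl hv.ne')
    convert this using 2; ring_nf
  have hT1 : HasDerivAt (fun t => a1 * Vt c2 b1 t ^ (p - 1))
      (a1 * (b1 * (p - 1) * Vt c2 b1 t ^ (p - 2))) t := hda.const_mul a1
  have hW : HasDerivAt (fun t => b1 * (p - 1) * Vt c2 b1 t ^ (p - 2))
      (b1 * (p - 1) * (b1 * (p - 2) * Vt c2 b1 t ^ (p - 3))) t := hdb.const_mul _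
  have hT2 := (hUt (c1 := c1) (a1 := a1) t).mul hW
  have hW3 : HasDerivAt (fun t => 2 * Ut c1 a1 t * a1 + 2 * Vt c2 b1 t * b1)
      (2 * a1 * a1 + 2 * b1 * b1) t :=
    ((((hUt (c1 := c1) (a1 := a1) t).const_mul 2).mul_const a1).add
      (((hVt (c2 := c2) (b1 := b1) t).const_mul 2).mul_const b1))
  have hQ : HasDerivAt (fun t => (Ut c1 a1 t ^ 2 + Vt c2 b1 t ^ 2) ^ (p / 2 - 1))
      ((2 * Ut c1 a1 t * a1 + 2 * Vt c2 b1 t * b1) * (p / 2 - 1)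
        * (Ut c1 a1 t ^ 2 + Vt c2 b1 t ^ 2) ^ (p / 2 - 2)) t := by
    have := (hSt (c1 := c1) (c2 := c2) (a1 := a1) (b1 := b1) t).rpow_const
      (p := p / 2 - 1) (Or.inl hs.ne')
    convert this using 2; ring_nf
  have hT3 := (hW3.mul_const (p / 2)).mul hQ
  have := (hT1.add hT2).add hT3
  refine this.congr_deriv ?_
  unfold G2
  try ring_nf

private lemma G2_nonneg (hp : 2 ≤ p) {t : ℝ} (hu : 0 < Ut c1 a1 t) (hv : 0 < Vt c2 b1 t) :
    0 ≤ G2 p c1 c2 a1 b1 t := by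
  set u := Ut c1 a1 t with hu'
  set v := Vt c2 b1 t with hv'
  have hs : 0 < u ^ 2 + v ^ 2 := by positivity
  set P1 := v ^ (p - 2) with hP1'
  set P2 := v ^ (p - 3) with hP2'
  set Q1 := (u ^ 2 + v ^ 2) ^ (p / 2 - 1) with hQ1'
  set Q2 := (u ^ 2 + v ^ 2) ^ (p / 2 - 2) with hQ2'
  have hP1 : 0 ≤ P1 := Real.rpow_nonneg hv.le _
  have hP2 : 0 ≤ P2 := Real.rpow_nonneg hv.le _
  have hQ1 : 0 ≤ Q1 := Real.rpow_nonneg hs.le _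
  have hQ2 : 0 ≤ Q2 := Real.rpow_nonneg hs.le _
  have hkey : P1 ≤ Q1 := key_rpow_le p u v hp hv
  unfold G2
  rw [← hu', ← hv', ← hP1', ← hP2', ← hQ1', ← hQ2']
  nlinarith [mul_nonneg (mul_nonneg (by linarith : (0:ℝ) ≤ p - 1) hP1) (sq_nonneg (a1 + b1)),
    mul_nonneg (mul_nonneg (by linarith : (0:ℝ) ≤ p - 1) (by linarith : (0:ℝ) ≤ Q1 - P1)) (by positivity : (0:ℝ) ≤ a1 ^ 2 + b1 ^ 2),
    mul_nonneg hQ1 (by positivity : (0:ℝ) ≤ a1 ^ 2 + b1 ^ 2),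
    mul_nonneg (mul_nonneg (mul_nonneg hu.le (by nlinarith : (0:ℝ) ≤ (p - 1) * (p - 2))) hP2) (sq_nonneg b1),
    mul_nonneg (mul_nonneg (by nlinarith : (0:ℝ) ≤ (p / 2) * (p / 2 - 1)) hQ2) (sq_nonneg (2 * u * a1 + 2 * v * b1))]

private lemma combo_pos {x y t : ℝ} (hx : 0 < x) (hy : 0 < y) (h0 : 0 ≤ t) (h1 : t ≤ 1) :
    0 < x + t * (y - x) := by
  rcases lt_or_ge t 1 with h | h
  · nlinarith [mul_pos (sub_pos.2 h) hx, mul_nonneg h0 hy.le]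
  · have ht : t = 1 := le_antisymm h1 h
    subst ht
    nlinarith

end aux

private lemma Yfun_convexOn_Ioi (p : ℝ) (hp : 2 ≤ p) :
    ConvexOn ℝ (Set.Ioi (0 : ℝ) ×ˢ Set.Ioi (0 : ℝ)) (Yfun p) := by
  refine ⟨(convex_Ioi 0).prod (convex_Ioi 0), ?_⟩
  intro x hx y hy a b ha hb hab
  simp only [Set.mem_prod, Set.mem_Ioi] at hx hy
  set c1 := x.1 with hc1
  set c2 := x.2 with hc2
  set a1 := y.1 - x.1 with ha1
  set b1 := y.2 - x.2 with hb1
  have hUpos : ∀ t ∈ Icc (0:ℝ) 1, 0 < Ut c1 a1 t := by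
    intro t ht
    unfold Ut
    rw [hc1, ha1]
    exact combo_pos hx.1 hy.1 ht.1 ht.2
  have hVpos : ∀ t ∈ Icc (0:ℝ) 1, 0 < Vt c2 b1 t := by
    intro t ht
    unfold Vt
    rw [hc2, hb1]
    exact combo_pos hx.2 hy.2 ht.1 ht.2
  have key : ConvexOn ℝ (Icc (0:ℝ) 1) (G0 p c1 c2 a1 b1) := by
    apply convexOn_of_hasDerivWithinAt2_nonneg (convex_Icc 0 1)
      (f' := G1 p c1 c2 a1 b1) (f'' := G2 p c1 c2 a1 b1)
    · have : G0 p c1 c2 a1 b1 = (Yfun p) ∘ (fun t => (Ut c1 a1 t, Vt c2 b1 t)) := by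
        funext t
        rw [Yfun_eq]
        rfl
      rw [this]
      exact ((Yfun_cont p hp).comp (by unfold Ut Vt; fun_prop)).continuousOn
    · intro t ht
      rw [interior_Icc] at ht
      have ht' : t ∈ Icc (0:ℝ) 1 := ⟨ht.1.le, ht.2.le⟩
      have hu := hUpos t ht'
      have hv := hVpos t ht'
      exact (hG0 hv (by positivity)).hasDerivWithinAt
    · intro t ht
      rw [interior_Icc] at ht
      have ht' : t ∈ Icc (0:ℝ) 1 := ⟨ht.1.le, ht.2.le⟩
      have hu := hUpos t ht'
      have hv := hVpos t ht'
      exact (hG1 hv (by positivity)).hasDerivWithinAt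
    · intro t ht
      rw [interior_Icc] at ht
      have ht' : t ∈ Icc (0:ℝ) 1 := ⟨ht.1.le, ht.2.le⟩
      exact G2_nonneg hp (hUpos t ht') (hVpos t ht')
  have h0 : (0:ℝ) ∈ Icc (0:ℝ) 1 := by norm_num
  have h1 : (1:ℝ) ∈ Icc (0:ℝ) 1 := by norm_num
  have hineq := key.2 h0 h1 ha hb hab
  simp only [smul_eq_mul, mul_zero, mul_one, zero_add] at hineq
  have e0 : G0 p c1 c2 a1 b1 0 = Yfun p x := by
    rw [Yfun_eq]
    unfold G0 Ut Vt
    norm_num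
    rfl
  have e1 : G0 p c1 c2 a1 b1 1 = Yfun p y := by
    rw [Yfun_eq]
    unfold G0 Ut Vt
    norm_num
    rw [hc1, ha1, hc2, hb1]
    ring_nf
  have eb : G0 p c1 c2 a1 b1 b = Yfun p (a • x + b • y) := by
    rw [Yfun_eq]
    dsimp only
    unfold G0 Ut Vt
    have e1' : (a • x + b • y).1 = c1 + b * a1 := by
      rw [hc1, ha1]
      simp only [Prod.fst_add, Prod.smul_fst, smul_eq_mul]
      linear_combination x.1 * hab
    have e2' : (a • x + b • y).2 = c2 + b * b1 := by
      rw [hc2, hb1]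
      simp only [Prod.snd_add, Prod.smul_snd, smul_eq_mul]
      linear_combination x.2 * hab
    rw [e1', e2']
  rw [e0, e1, eb] at hineq
  simpa using hineq

theorem Yfun_convex (p : ℝ) (hp : 2 ≤ p) :
    ConvexOn ℝ (Set.Ici (0 : ℝ) ×ˢ Set.Ici (0 : ℝ)) (Yfun p) := by
  have hint := Yfun_convexOn_Ioi p hp
  have hcont := Yfun_cont p hp
  refine ⟨(convex_Ici 0).prod (convex_Ici 0), ?_⟩
  intro x hx y hy a b ha hb hab
  simp only [Set.mem_prod, Set.mem_Ici] at hx hy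
  have key : ∀ ε ∈ Ioi (0:ℝ),
      Yfun p (a • x + b • y + (ε, ε)) ≤ a * Yfun p (x + (ε, ε)) + b * Yfun p (y + (ε, ε)) := by
    intro ε hε
    rw [Set.mem_Ioi] at hε
    have hxe : x + (ε, ε) ∈ Set.Ioi (0:ℝ) ×ˢ Set.Ioi (0:ℝ) := by
      constructor <;> simp only [Prod.fst_add, Prod.snd_add, Set.mem_Ioi] <;>
        [linarith [hx.1]; linarith [hx.2]]
    have hye : y + (ε, ε) ∈ Set.Ioi (0:ℝ) ×ˢ Set.Ioi (0:ℝ) := by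
      constructor <;> simp only [Prod.fst_add, Prod.snd_add, Set.mem_Ioi] <;>
        [linarith [hy.1]; linarith [hy.2]]
    have hsum : a • (x + (ε, ε)) + b • (y + (ε, ε)) = a • x + b • y + (ε, ε) := by
      apply Prod.ext <;>
        simp only [Prod.fst_add, Prod.snd_add, Prod.smul_fst, Prod.smul_snd, smul_eq_mul] <;>
        linear_combination ε * hab
    have := hint.2 hxe hye ha hb hab
    rw [hsum] at this
    simpa using this
  have t1 : Tendsto (fun ε : ℝ => Yfun p (a • x + b • y + (ε, ε))) (𝓝[>] 0)
      (𝓝 (Yfun p (a • x + b • y))) := by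
    have hc : Continuous fun ε : ℝ => Yfun p (a • x + b • y + (ε, ε)) :=
      hcont.comp (by fun_prop)
    have := hc.tendsto 0
    simp only [add_zero, Prod.mk_zero_zero] at this
    exact Tendsto.mono_left (by simpa using this) nhdsWithin_le_nhds
  have t2 : Tendsto (fun ε : ℝ => a * Yfun p (x + (ε, ε)) + b * Yfun p (y + (ε, ε))) (𝓝[>] 0)
      (𝓝 (a * Yfun p x + b * Yfun p y)) := by
    have hc : Continuous fun ε : ℝ =>
        a * Yfun p (x + (ε, ε)) + b * Yfun p (y + (ε, ε)) := by
      have h1 : Continuous fun ε : ℝ => Yfun p (x + (ε, ε)) := hcont.comp (by fun_prop)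
      have h2 : Continuous fun ε : ℝ => Yfun p (y + (ε, ε)) := hcont.comp (by fun_prop)
      exact (continuous_const.mul h1).add (continuous_const.mul h2)
    have := hc.tendsto 0
    simp only [add_zero, Prod.mk_zero_zero] at this
    exact Tendsto.mono_left (by simpa using this) nhdsWithin_le_nhds
  have := le_of_tendsto_of_tendsto t1 t2 (eventually_nhdsWithin_of_forall key)
  simpa using this
end

section
/- For p ≥ 2, the functions Y^{(+)}(z₁,z₂) := z₁ (max(z₂,0))^{p-1} + |z|^p and Y^{(-)}(z₁,z₂) := z₁ (max(-z₂,0))^{p-1} + |z|^p are convex on [0,∞) × R. -/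
set_option maxHeartbeats 1000000
open Set Real Filter

lemma hasDerivAt_maxrpow {q : ℝ} (hq : 1 < q) (y : ℝ) :
    HasDerivAt (fun y : ℝ => max y 0 ^ q) (q * max y 0 ^ (q - 1)) y := by
  have hq0 : (0:ℝ) < q := by linarith
  rcases lt_trichotomy y 0 with h | h | h
  · have hev : (fun z : ℝ => max z 0 ^ q) =ᶠ[nhds y] fun _ => (0:ℝ) ^ q := by
      filter_upwards [Iio_mem_nhds h] with z hz
      rw [max_eq_right (le_of_lt hz)]
    have h0 : HasDerivAt (fun _ : ℝ => (0:ℝ) ^ q) 0 y := hasDerivAt_const _ _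
    have := h0.congr_of_eventuallyEq hev
    simpa [max_eq_right h.le, Real.zero_rpow (show q - 1 ≠ 0 by intro hh; linarith)] using this
  · subst h
    rw [hasDerivAt_iff_tendsto_slope]
    have hval : q * max 0 0 ^ (q - 1) = 0 := by
      simp [Real.zero_rpow (show q - 1 ≠ 0 by intro hh; linarith)]
    rw [hval]
    apply squeeze_zero_norm' (a := fun z : ℝ => |z| ^ (q - 1))
    · filter_upwards [self_mem_nhdsWithin] with z (hz : z ≠ 0)
      have h1 : ‖slope (fun y : ℝ => max y 0 ^ q) 0 z‖ = max z 0 ^ q / |z| := by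
        rw [slope_def_field]
        simp only [max_self, Real.zero_rpow (ne_of_gt hq0), sub_zero]
        rw [Real.norm_eq_abs, abs_div, abs_of_nonneg (Real.rpow_nonneg (le_max_right _ _) _)]
      rw [h1]
      have h2 : max z 0 ^ q ≤ |z| ^ q :=
        Real.rpow_le_rpow (le_max_right _ _) (max_le (le_abs_self z) (abs_nonneg z)) hq0.le
      rw [Real.rpow_sub (abs_pos.mpr hz), Real.rpow_one]
      gcongr
    · have t1 : Tendsto (fun z : ℝ => |z|) (nhds 0) (nhds 0) := by
        simpa using continuous_abs.tendsto (0:ℝ)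
      have t2 : Tendsto (fun u : ℝ => u ^ (q-1)) (nhds 0) (nhds ((0:ℝ) ^ (q-1))) :=
        (Real.continuousAt_rpow_const 0 (q-1) (Or.inr (by linarith))).tendsto
      have := t2.comp t1
      rw [Real.zero_rpow (show q - 1 ≠ 0 by intro hh; linarith)] at this
      exact this.mono_left nhdsWithin_le_nhds
  · have hev : (fun z : ℝ => max z 0 ^ q) =ᶠ[nhds y] fun z => z ^ q := by
      filter_upwards [Ioi_mem_nhds h] with z hz
      rw [max_eq_left (le_of_lt hz)]
    have h0 : HasDerivAt (fun z : ℝ => z ^ q) (q * y ^ (q - 1)) y :=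
      Real.hasDerivAt_rpow_const (Or.inl (ne_of_gt h))
    have := h0.congr_of_eventuallyEq hev
    simpa [max_eq_left h.le] using this


lemma det_ineq {p X Y T U W s R : ℝ} (hp : 2 < p) (hX : 0 ≤ X) (hY : 0 < Y)
    (hW : W = X^2 + Y^2) (hT : 0 < T) (hU : 0 < U)
    (key2 : U^2*Y^2 ≤ T^2*W^2) (keyU : U*Y^2*R ≤ T*W^2)
    (hYR : Y ≤ R) (hs1 : 1 ≤ s) (hs2 : s^2 = p - 1) :
    ((p-1)*(U*Y) + p*(p-2)*T*X*Y)^2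
      ≤ (p*(T*W) + p*(p-2)*T*X^2) * (p*(T*W) + p*(p-2)*T*Y^2 + (p-1)*(p-2)*X*U) := by
  have hs0 : (0:ℝ) < s := by linarith
  have hKnn : (0:ℝ) ≤ T^2*W^2 := by positivity
  have hΔ : 0 ≤ p^2*(T^2*W^2) + p*(p-2)*(T*X*U)*((p-1)*X^2-Y^2) - (p-1)*(U^2*Y^2) := by
    rcases le_or_gt (Y^2) ((p-1)*X^2) with hc | hc
    · have hmid : 0 ≤ p*(p-2)*(T*X*U)*((p-1)*X^2-Y^2) := by
        apply mul_nonneg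
        · apply mul_nonneg (by nlinarith) (mul_nonneg (mul_nonneg hT.le hX) hU.le)
        · linarith
      have u1 : 0 ≤ (p-1)*(T^2*W^2 - U^2*Y^2) := mul_nonneg (by linarith) (sub_nonneg.mpr key2)
      have u2 : 0 ≤ (p^2-(p-1))*(T^2*W^2) := mul_nonneg (by nlinarith) hKnn
      linarith [u1, u2, hmid]
    · have hsX : s*X ≤ Y := by
        have h1 : (s*X)^2 ≤ Y^2 := by nlinarith
        have h2 := Real.sqrt_le_sqrt h1
        rwa [Real.sqrt_sq (by positivity), Real.sqrt_sq hY.le] at h2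
      have m1 : s*(T*X*U*Y^2) ≤ T^2*W^2 := by
        calc s*(T*X*U*Y^2) = (s*X)*(T*U*Y^2) := by ring
          _ ≤ Y*(T*U*Y^2) := by
              apply mul_le_mul_of_nonneg_right hsX; positivity
          _ ≤ R*(T*U*Y^2) := by
              apply mul_le_mul_of_nonneg_right hYR; positivity
          _ = T*(U*Y^2*R) := by ring
          _ ≤ T*(T*W^2) := mul_le_mul_of_nonneg_left keyU hT.le
          _ = T^2*W^2 := by ring
      have poly : 0 ≤ s*p^2 - s*(p-1) - p*(p-2) := by
        have hp' : p = s^2 + 1 := by linarith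
        rw [hp']
        nlinarith [mul_nonneg (pow_nonneg hs0.le 4) (sub_nonneg.mpr hs1)]
      have hprod1 : 0 ≤ (s*p^2 - s*(p-1) - p*(p-2)) * (T^2*W^2) := mul_nonneg poly hKnn
      have hprod2 : 0 ≤ (p*(p-2)) * (T^2*W^2 - s*(T*X*U*Y^2)) :=
        mul_nonneg (by nlinarith) (sub_nonneg.mpr m1)
      have hprod3 : 0 ≤ (s*(p-1)) * (T^2*W^2 - U^2*Y^2) :=
        mul_nonneg (mul_nonneg hs0.le (by linarith)) (sub_nonneg.mpr key2)
      have hsD : 0 ≤ s*(p^2*(T^2*W^2) - p*(p-2)*(T*X*U*Y^2) - (p-1)*(U^2*Y^2)) := by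
        linarith [hprod1, hprod2, hprod3]
      have hD : 0 ≤ p^2*(T^2*W^2) - p*(p-2)*(T*X*U*Y^2) - (p-1)*(U^2*Y^2) := by
        by_contra hcon
        push_neg at hcon
        nlinarith [mul_pos hs0 (neg_pos.mpr hcon)]
      have hmid2 : -(p*(p-2)*(T*X*U*Y^2)) ≤ p*(p-2)*(T*X*U)*((p-1)*X^2-Y^2) := by
        have hw : 0 ≤ (p*(p-2)*(p-1)) * (T*X*U*X^2) := by
          apply mul_nonneg (le_of_lt (mul_pos (mul_pos (show (0:ℝ) < p by linarith)
            (show (0:ℝ) < p-2 by linarith)) (show (0:ℝ) < p-1 by linarith)))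
          apply mul_nonneg (mul_nonneg (mul_nonneg hT.le hX) hU.le) (sq_nonneg X)
        linarith [hw]
      linarith [hD, hmid2]
  have hfin : 0 ≤ (p-1) * (p^2*(T^2*W^2) + p*(p-2)*(T*X*U)*((p-1)*X^2-Y^2) - (p-1)*(U^2*Y^2)) :=
    mul_nonneg (by linarith) hΔ
  subst hW
  linarith [hfin]

lemma monotoneOn_glue {G : ℝ → ℝ} (hc : Continuous G) (t₀ : ℝ)
    (h : ∀ t ∈ Set.Ioo (0:ℝ) 1, t ≠ t₀ → DifferentiableAt ℝ G t ∧ 0 ≤ deriv G t) :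
    MonotoneOn G (Set.Icc 0 1) := by
  have base : ∀ α β : ℝ, 0 ≤ α → β ≤ 1 → (∀ t ∈ Set.Ioo α β, t ≠ t₀) →
      MonotoneOn G (Set.Icc α β) := by
    intro α β hα hβ hne
    have hsub : Set.Ioo α β ⊆ Set.Ioo (0:ℝ) 1 := fun t ht =>
      ⟨lt_of_le_of_lt hα ht.1, lt_of_lt_of_le ht.2 hβ⟩
    apply monotoneOn_of_deriv_nonneg (convex_Icc α β) hc.continuousOn
    · rw [interior_Icc]
      intro t ht
      exact ((h t (hsub ht) (hne t ht)).1).differentiableWithinAt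
    · rw [interior_Icc]
      intro t ht
      exact (h t (hsub ht) (hne t ht)).2
  rcases le_or_gt t₀ 0 with h0 | h0
  · exact base 0 1 le_rfl le_rfl (fun t ht => ne_of_gt (lt_of_le_of_lt h0 ht.1))
  rcases le_or_gt 1 t₀ with h1 | h1
  · exact base 0 1 le_rfl le_rfl (fun t ht => ne_of_lt (lt_of_lt_of_le ht.2 h1))
  -- 0 < t₀ < 1
  have m1 : MonotoneOn G (Set.Icc 0 t₀) :=
    base 0 t₀ le_rfl h1.le (fun t ht => ne_of_lt ht.2)
  have m2 : MonotoneOn G (Set.Icc t₀ 1) :=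
    base t₀ 1 h0.le le_rfl (fun t ht => ne_of_gt ht.1)
  intro x hx y hy hxy
  rcases le_or_gt y t₀ with hy0 | hy0
  · exact m1 ⟨hx.1, le_trans hxy hy0⟩ ⟨hy.1, hy0⟩ hxy
  rcases le_or_gt t₀ x with hx0 | hx0
  · exact m2 ⟨hx0, hx.2⟩ ⟨le_trans hx0 hxy, hy.2⟩ hxy
  · have e1 : G x ≤ G t₀ := m1 ⟨hx.1, hx0.le⟩ ⟨h0.le, le_rfl⟩ hx0.le
    have e2 : G t₀ ≤ G y := m2 ⟨le_rfl, h1.le⟩ ⟨hy0.le, hy.2⟩ hy0.le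
    linarith

lemma seg_convexOn {p : ℝ} (hp : 2 < p) (a₁ a₂ v₁ v₂ : ℝ)
    (h0 : 0 ≤ a₁) (h1 : 0 ≤ a₁ + v₁) :
    ConvexOn ℝ (Set.Icc (0:ℝ) 1)
      (fun t => (a₁ + t * v₁) * max (a₂ + t * v₂) 0 ^ (p - 1)
        + ((a₁ + t * v₁) ^ 2 + (a₂ + t * v₂) ^ 2) ^ (p / 2)) := by
  set X : ℝ → ℝ := fun t => a₁ + t * v₁ with hXdef
  set Y : ℝ → ℝ := fun t => a₂ + t * v₂ with hYdef
  set W : ℝ → ℝ := fun t => X t ^ 2 + Y t ^ 2 with hWdef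
  set g : ℝ → ℝ := fun t => X t * max (Y t) 0 ^ (p - 1) + W t ^ (p / 2) with hgdef
  set G : ℝ → ℝ := fun t => v₁ * max (Y t) 0 ^ (p - 1)
      + X t * ((p-1) * max (Y t) 0 ^ (p - 2) * v₂)
      + p * W t ^ ((p-2)/2) * (X t * v₁ + Y t * v₂) with hGdef
  have hXd : ∀ t, HasDerivAt X v₁ t := fun t => by
    simpa [hXdef] using ((hasDerivAt_id t).mul_const v₁).const_add a₁
  have hYd : ∀ t, HasDerivAt Y v₂ t := fun t => by
    simpa [hYdef] using ((hasDerivAt_id t).mul_const v₂).const_add a₂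
  have hXc : Continuous X := by fun_prop
  have hYc : Continuous Y := by fun_prop
  have hWc : Continuous W := by fun_prop
  have hWd : ∀ t, HasDerivAt W (2 * (X t * v₁ + Y t * v₂)) t := fun t => by
    have := ((hXd t).pow 2).add ((hYd t).pow 2)
    exact this.congr_deriv (by rw [show (2:ℕ)-1 = 1 from rfl]; push_cast; ring)
  have hWnn : ∀ t, 0 ≤ W t := fun t => by positivity
  have hmax : ∀ t, HasDerivAt (fun s => max (Y s) 0 ^ (p-1))
      ((p-1) * max (Y t) 0 ^ (p-2) * v₂) t := fun t => by
    have := (hasDerivAt_maxrpow (show 1 < p - 1 by linarith) (Y t)).comp t (hYd t)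
    have h2 : p - 1 - 1 = p - 2 := by ring
    rw [h2] at this
    exact this
  have hSd : ∀ t, HasDerivAt (fun s => W s ^ (p/2))
      (p * W t ^ ((p-2)/2) * (X t * v₁ + Y t * v₂)) t := fun t => by
    have := (hWd t).rpow_const (p := p/2) (Or.inr (by linarith))
    convert this using 1
    rw [show p/2 - 1 = (p-2)/2 by ring]
    ring
  have hg : ∀ t, HasDerivAt g (G t) t := fun t =>
    (((hXd t).mul (hmax t)).add (hSd t))
  have hrpowc : ∀ (f : ℝ → ℝ) (e : ℝ), 0 < e → Continuous f → (∀ t, 0 ≤ f t) →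
      Continuous (fun t => f t ^ e) := by
    intro f e he hf hnn
    rw [continuous_iff_continuousAt]
    intro t
    exact (Real.continuousAt_rpow_const (f t) e (Or.inr he.le)).comp hf.continuousAt
  have hGc : Continuous G := by
    apply Continuous.add
    apply Continuous.add
    · exact continuous_const.mul
        (hrpowc _ (p-1) (by linarith) (hYc.max continuous_const) (fun t => le_max_right _ _))
    · exact hXc.mul ((continuous_const.mul (hrpowc _ (p-2) (by linarith) (hYc.max continuous_const)
        (fun t => le_max_right _ _))).mul continuous_const)
    · exact (continuous_const.mul (hrpowc _ ((p-2)/2) (by linarith)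
        hWc (fun t => by positivity))).mul ((hXc.mul continuous_const).add (hYc.mul continuous_const))
  have key_lower : ∀ t, W t ≠ 0 → (∀ᶠ s in nhds t, Y s ≤ 0) →
      DifferentiableAt ℝ G t ∧ 0 ≤ deriv G t := by
    intro t hW hYev
    set G₃ : ℝ → ℝ := fun s => p * W s ^ ((p-2)/2) * (X s * v₁ + Y s * v₂) with hG3def
    have hEq : G =ᶠ[nhds t] G₃ := by
      filter_upwards [hYev] with s hs
      have hm : max (Y s) 0 = 0 := max_eq_right hs
      simp only [hGdef, hG3def, hm,
        Real.zero_rpow (show p - 1 ≠ 0 by intro hh; linarith),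
        Real.zero_rpow (show p - 2 ≠ 0 by intro hh; linarith)]
      ring
    have hG3d : HasDerivAt G₃
        (p * (2 * (X t * v₁ + Y t * v₂) * ((p-2)/2) * W t ^ ((p-2)/2 - 1)) * (X t * v₁ + Y t * v₂)
          + p * W t ^ ((p-2)/2) * (v₁ * v₁ + v₂ * v₂)) t := by
      have hin : HasDerivAt (fun s => X s * v₁ + Y s * v₂) (v₁ * v₁ + v₂ * v₂) t :=
        ((hXd t).mul_const v₁).add ((hYd t).mul_const v₂)
      have houter : HasDerivAt (fun s => p * W s ^ ((p-2)/2))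
          (p * (2 * (X t * v₁ + Y t * v₂) * ((p-2)/2) * W t ^ ((p-2)/2 - 1))) t :=
        ((hWd t).rpow_const (Or.inl hW)).const_mul p
      exact houter.mul hin
    have hGd : HasDerivAt G _ t := hG3d.congr_of_eventuallyEq hEq
    refine ⟨hGd.differentiableAt, ?_⟩
    rw [hGd.deriv]
    have h1 : 0 ≤ W t ^ ((p-2)/2 - 1) := Real.rpow_nonneg (hWnn t) _
    have h2 : 0 ≤ W t ^ ((p-2)/2) := Real.rpow_nonneg (hWnn t) _
    have hA1 : p * (2 * (X t * v₁ + Y t * v₂) * ((p-2)/2) * W t ^ ((p-2)/2 - 1)) * (X t * v₁ + Y t * v₂)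
        = (p * (p-2)) * (W t ^ ((p-2)/2 - 1) * ((X t * v₁ + Y t * v₂) * (X t * v₁ + Y t * v₂))) := by
      ring
    have hA2 : 0 ≤ (p * (p-2)) * (W t ^ ((p-2)/2 - 1) * ((X t * v₁ + Y t * v₂) * (X t * v₁ + Y t * v₂))) :=
      mul_nonneg (by nlinarith) (mul_nonneg h1 (mul_self_nonneg _))
    have hA3 : 0 ≤ p * W t ^ ((p-2)/2) * (v₁ * v₁ + v₂ * v₂) :=
      mul_nonneg (mul_nonneg (by linarith) h2)
        (add_nonneg (mul_self_nonneg _) (mul_self_nonneg _))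
    rw [hA1]
    linarith
  have key_upper : ∀ t, 0 < Y t → 0 ≤ X t →
      DifferentiableAt ℝ G t ∧ 0 ≤ deriv G t := by
    intro t hY hX
    have hWXY : W t = X t ^ 2 + Y t ^ 2 := by rw [hWdef]
    have hW : 0 < W t := by
      have h1 : (0:ℝ) < Y t ^ 2 := pow_pos hY 2
      have h2 : (0:ℝ) ≤ X t ^ 2 := sq_nonneg _
      rw [hWXY]; linarith
    have hYev : ∀ᶠ s in nhds t, 0 < Y s := (hYc.continuousAt).eventually_const_lt hY
    -- the three terms of G, in rpow form
    set Gp : ℝ → ℝ := fun s => v₁ * Y s ^ (p - 1)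
        + X s * ((p-1) * Y s ^ (p - 2) * v₂)
        + p * W s ^ ((p-2)/2) * (X s * v₁ + Y s * v₂) with hGpdef
    have hEq : G =ᶠ[nhds t] Gp := by
      filter_upwards [hYev] with s hs
      rw [hGdef, hGpdef]
      dsimp only
      rw [max_eq_left hs.le]
    have hT1 := ((hYd t).rpow_const (p := p-1) (Or.inl hY.ne')).const_mul v₁
    have hT2 := (hXd t).mul ((((hYd t).rpow_const (p := p-2) (Or.inl hY.ne')).const_mul
        (p-1)).mul_const v₂)
    have hT3 := (((hWd t).rpow_const (p := (p-2)/2) (Or.inl hW.ne')).const_mul p).mul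
        (((hXd t).mul_const v₁).add ((hYd t).mul_const v₂))
    have hGpd := (hT1.add hT2).add hT3
    obtain ⟨A, hAdef⟩ : ∃ A : ℝ, A = p * W t ^ ((p-2)/2) + p*(p-2) * W t ^ ((p-4)/2) * X t^2 :=
      ⟨_, rfl⟩
    obtain ⟨B, hBdef⟩ : ∃ B : ℝ, B = (p-1) * Y t ^ (p-2) + p*(p-2) * W t ^ ((p-4)/2) * X t * Y t :=
      ⟨_, rfl⟩
    obtain ⟨C, hCdef⟩ : ∃ C : ℝ,
        C = p * W t ^ ((p-2)/2) + p*(p-2) * W t ^ ((p-4)/2) * Y t^2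
          + (p-1)*(p-2) * X t * Y t ^ (p-3) := ⟨_, rfl⟩
    have hGd : HasDerivAt G (A*v₁^2 + 2*B*v₁*v₂ + C*v₂^2) t := by
      refine HasDerivAt.congr_of_eventuallyEq ?_ hEq
      convert hGpd using 1
      · rfl
      rw [hAdef, hBdef, hCdef,
        show p-1-1 = p-2 by ring, show p-2-1 = p-3 by ring, show (p-2)/2-1 = (p-4)/2 by ring]
      simp only [Pi.add_apply]
      ring
    refine ⟨hGd.differentiableAt, ?_⟩
    rw [hGd.deriv]
    -- now positivity of the quadratic form
    have hA : 0 < A := by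
      have h1 : 0 < p * W t ^ ((p-2)/2) :=
        mul_pos (by linarith) (Real.rpow_pos_of_pos hW _)
      have h2 : 0 ≤ p*(p-2) * W t ^ ((p-4)/2) * X t^2 := by
        apply mul_nonneg (mul_nonneg (by nlinarith) (Real.rpow_nonneg hW.le _)) (sq_nonneg _)
      rw [hAdef]; linarith
    have hDet : B^2 ≤ A*C := by
      -- set up the abstract inequality
      have hT : 0 < W t ^ ((p-4)/2) := Real.rpow_pos_of_pos hW _
      have hU : 0 < Y t ^ (p-3) := Real.rpow_pos_of_pos hY _
      have hY2W : Y t ^ 2 ≤ W t := by rw [hWXY]; nlinarith [sq_nonneg (X t)]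
      have hR : 0 < Real.sqrt (W t) := Real.sqrt_pos.mpr hW
      have hYR : Y t ≤ Real.sqrt (W t) := by
        rw [show Y t = Real.sqrt (Y t ^ 2) by rw [Real.sqrt_sq hY.le]]
        exact Real.sqrt_le_sqrt hY2W
      have e1 : (Y t ^ (p-3))^2 * Y t^2 = (Y t ^ 2) ^ (p-2) := by
        calc (Y t ^ (p-3))^(2:ℕ) * Y t^(2:ℕ)
            = (Y t ^ (p-3))^((2:ℕ):ℝ) * Y t ^ ((2:ℕ):ℝ) := by
              rw [Real.rpow_natCast, Real.rpow_natCast]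
          _ = Y t ^ ((p-3)*2) * Y t ^ ((2:ℕ):ℝ) := by
              rw [← Real.rpow_mul hY.le]; norm_num
          _ = Y t ^ ((p-3)*2 + 2) := by
              rw [← Real.rpow_add hY]; norm_num
          _ = (Y t ^ ((2:ℕ):ℝ)) ^ (p-2) := by
              rw [← Real.rpow_mul hY.le]; congr 1; push_cast; ring
          _ = (Y t ^ (2:ℕ)) ^ (p-2) := by rw [Real.rpow_natCast]
      have e2 : (W t ^ ((p-4)/2))^2 * W t^2 = (W t ^ 2) ^ ((p-2)/2) := by
        calc (W t ^ ((p-4)/2))^(2:ℕ) * W t^(2:ℕ)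
            = (W t ^ ((p-4)/2))^((2:ℕ):ℝ) * W t ^ ((2:ℕ):ℝ) := by
              rw [Real.rpow_natCast, Real.rpow_natCast]
          _ = W t ^ ((p-4)/2*2) * W t ^ ((2:ℕ):ℝ) := by
              rw [← Real.rpow_mul hW.le]; norm_num
          _ = W t ^ ((p-4)/2*2 + 2) := by
              rw [← Real.rpow_add hW]; norm_num
          _ = (W t ^ ((2:ℕ):ℝ)) ^ ((p-2)/2) := by
              rw [← Real.rpow_mul hW.le]; congr 1; push_cast; ring
          _ = (W t ^ (2:ℕ)) ^ ((p-2)/2) := by rw [Real.rpow_natCast]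
      have e2' : (W t ^ ((p-4)/2))^2 * W t^2 = (W t) ^ (p-2) := by
        rw [e2, ← Real.rpow_natCast (W t) 2, ← Real.rpow_mul hW.le]
        congr 1; push_cast; ring
      have key2 : (Y t ^ (p-3))^2 * Y t^2 ≤ (W t ^ ((p-4)/2))^2 * W t^2 := by
        rw [e1, e2']
        exact Real.rpow_le_rpow (sq_nonneg _) hY2W (by linarith)
      have eU : Y t ^ (p-3) * Y t^2 = Y t ^ (p-1) := by
        rw [← Real.rpow_natCast (Y t) 2, ← Real.rpow_add hY]
        congr 1; push_cast; ring
      have eT : W t ^ ((p-4)/2) * W t^2 = Real.sqrt (W t) ^ (p-1) * Real.sqrt (W t) := by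
        have h1 : W t ^ ((p-4)/2) * W t^2 = W t ^ (p/2) := by
          rw [← Real.rpow_natCast (W t) 2, ← Real.rpow_add hW]
          congr 1; push_cast; ring
        have h2 : W t ^ (p/2) = Real.sqrt (W t) ^ p := by
          conv_lhs => rw [← Real.sq_sqrt hW.le]
          rw [← Real.rpow_natCast (Real.sqrt (W t)) 2, ← Real.rpow_mul (Real.sqrt_nonneg _)]
          congr 1; push_cast; ring
        have h3 : Real.sqrt (W t) ^ p = Real.sqrt (W t) ^ (p-1) * Real.sqrt (W t) := by
          calc Real.sqrt (W t) ^ p = Real.sqrt (W t) ^ ((p-1)+1) := by congr 1; ring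
            _ = Real.sqrt (W t) ^ (p-1) * Real.sqrt (W t) ^ (1:ℝ) := Real.rpow_add hR _ _
            _ = Real.sqrt (W t) ^ (p-1) * Real.sqrt (W t) := by rw [Real.rpow_one]
        rw [h1, h2, h3]
      have keyU : Y t ^ (p-3) * Y t^2 * Real.sqrt (W t) ≤ W t ^ ((p-4)/2) * W t^2 := by
        rw [eU, eT]
        exact mul_le_mul_of_nonneg_right
          (Real.rpow_le_rpow hY.le hYR (by linarith)) (Real.sqrt_nonneg _)
      have hs1 : 1 ≤ Real.sqrt (p-1) := by
        have h4 : Real.sqrt 1 ≤ Real.sqrt (p-1) := Real.sqrt_le_sqrt (by linarith)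
        simpa using h4
      have hs2 : Real.sqrt (p-1) ^ 2 = p - 1 := Real.sq_sqrt (by linarith)
      have hd := det_ineq hp hX hY hWXY hT hU key2 keyU hYR hs1 hs2
      have r1 : W t ^ ((p-2)/2) = W t ^ ((p-4)/2) * W t := by
        rw [show (p-2)/2 = (p-4)/2 + 1 by ring, Real.rpow_add hW, Real.rpow_one]
      have r2 : Y t ^ (p-2) = Y t ^ (p-3) * Y t := by
        rw [show p-2 = (p-3) + 1 by ring, Real.rpow_add hY, Real.rpow_one]
      rw [hAdef, hBdef, hCdef, r1, r2]
      exact hd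
    nlinarith [sq_nonneg (A*v₁ + B*v₂), mul_nonneg (sub_nonneg.mpr hDet) (sq_nonneg v₂),
      mul_pos hA hA, hA]


  -- X is nonnegative on [0,1]
  have hXnn : ∀ t ∈ Set.Ioo (0:ℝ) 1, 0 ≤ X t := by
    intro t ht
    have hx : X t = (1 - t) * a₁ + t * (a₁ + v₁) := by rw [hXdef]; ring
    rw [hx]
    have h3 := ht.1
    have h4 := ht.2
    exact add_nonneg (mul_nonneg (by linarith) h0) (mul_nonneg (by linarith) h1)
  have conclude : ∀ t₀ : ℝ, (∀ t ∈ Set.Ioo (0:ℝ) 1, t ≠ t₀ →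
      DifferentiableAt ℝ G t ∧ 0 ≤ deriv G t) → ConvexOn ℝ (Set.Icc (0:ℝ) 1) g := by
    intro t₀ hder
    have hgc : Continuous g := by
      rw [continuous_iff_continuousAt]; exact fun t => (hg t).continuousAt
    have hmono := monotoneOn_glue hGc t₀ hder
    have hderiv : deriv g = G := funext fun t => (hg t).deriv
    apply MonotoneOn.convexOn_of_deriv (convex_Icc 0 1) hgc.continuousOn
    · exact fun t _ => (hg t).differentiableAt.differentiableWithinAt
    · rw [hderiv, interior_Icc]
      exact hmono.mono Set.Ioo_subset_Icc_self
  suffices hs : ConvexOn ℝ (Set.Icc (0:ℝ) 1) g by exact hs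
  rcases eq_or_ne v₂ 0 with hv2 | hv2
  · have hYconst : ∀ t, Y t = a₂ := fun t => by rw [hYdef]; simp [hv2]
    rcases lt_trichotomy a₂ 0 with ha2 | ha2 | ha2
    · apply conclude 37
      intro t ht _
      have hWpos : 0 < W t := by
        have h5 : Y t = a₂ := hYconst t
        have h6 : 0 < Y t ^ 2 := by rw [h5]; exact pow_two_pos_of_ne_zero (ne_of_lt ha2)
        have h7 : 0 ≤ X t ^ 2 := sq_nonneg _
        rw [hWdef]; dsimp only; linarith
      exact key_lower t hWpos.ne'
        (Filter.Eventually.of_forall (fun s => by rw [hYconst s]; exact ha2.le))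
    · rcases eq_or_ne v₁ 0 with hv1 | hv1
      · have hgconst : g = fun _ => a₁ * max a₂ 0 ^ (p-1) + (a₁^2 + a₂^2)^(p/2) := by
          funext t
          simp only [hgdef, hWdef, hXdef, hYdef, hv1, hv2, mul_zero, add_zero]
        rw [hgconst]
        exact convexOn_const _ (convex_Icc 0 1)
      · apply conclude (-a₁ / v₁)
        intro t ht hne
        have hXne : X t ≠ 0 := by
          rw [hXdef]
          dsimp only
          intro hc
          apply hne
          field_simp
          linarith
        have hWpos : 0 < W t := by
          have h6 : 0 < X t ^ 2 := pow_two_pos_of_ne_zero hXne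
          have h7 : 0 ≤ Y t ^ 2 := sq_nonneg _
          rw [hWdef]; dsimp only; linarith
        exact key_lower t hWpos.ne'
          (Filter.Eventually.of_forall (fun s => by rw [hYconst s, ha2]))
    · apply conclude 37
      intro t ht _
      exact key_upper t (by rw [hYconst t]; exact ha2) (hXnn t ht)
  · apply conclude (-a₂ / v₂)
    intro t ht hne
    have hYne : Y t ≠ 0 := by
      rw [hYdef]
      dsimp only
      intro hc
      apply hne
      field_simp
      linarith
    rcases lt_or_gt_of_ne hYne with hneg | hpos
    · have hWpos : 0 < W t := by
        have h6 : 0 < Y t ^ 2 := pow_two_pos_of_ne_zero hYne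
        have h7 : 0 ≤ X t ^ 2 := sq_nonneg _
        rw [hWdef]; dsimp only; linarith
      have hev : ∀ᶠ s in nhds t, Y s ≤ 0 :=
        ((hYc.continuousAt (x := t)).eventually_lt_const hneg).mono (fun s hs => hs.le)
      exact key_lower t hWpos.ne' hev
    · exact key_upper t hpos (hXnn t ht)
noncomputable def Yplus (p : ℝ) (z : ℝ × ℝ) : ℝ :=
  z.1 * (max z.2 0) ^ (p - 1) + Real.sqrt (z.1 ^ 2 + z.2 ^ 2) ^ p

noncomputable def Yminus (p : ℝ) (z : ℝ × ℝ) : ℝ :=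
  z.1 * (max (-z.2) 0) ^ (p - 1) + Real.sqrt (z.1 ^ 2 + z.2 ^ 2) ^ p

lemma sqrt_rpow_eq {u : ℝ} (hu : 0 ≤ u) (p : ℝ) : Real.sqrt u ^ p = u ^ (p/2) := by
  rw [Real.sqrt_eq_rpow, ← Real.rpow_mul hu]
  congr 1
  ring

lemma convexOn_congrOn {f g : ℝ×ℝ → ℝ} {s : Set (ℝ×ℝ)} (hf : ConvexOn ℝ s f)
    (h : ∀ z ∈ s, f z = g z) : ConvexOn ℝ s g := by
  refine ⟨hf.1, ?_⟩
  intro a ha b hb σ τ hσ hτ hστ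
  rw [← h _ ha, ← h _ hb, ← h _ (hf.1 ha hb hσ hτ hστ)]
  exact hf.2 ha hb hσ hτ hστ

lemma reflectConv {f : ℝ×ℝ → ℝ}
    (hf : ConvexOn ℝ (Set.Ici (0:ℝ) ×ˢ (Set.univ : Set ℝ)) f) :
    ConvexOn ℝ (Set.Ici (0:ℝ) ×ˢ (Set.univ : Set ℝ)) (fun z => f (z.1, -z.2)) := by
  refine ⟨hf.1, ?_⟩
  intro a ha b hb σ τ hσ hτ hστ
  have ha1 : a.1 ∈ Set.Ici (0:ℝ) := (Set.mem_prod.mp ha).1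
  have hb1 : b.1 ∈ Set.Ici (0:ℝ) := (Set.mem_prod.mp hb).1
  have ha' : ((a.1, -a.2) : ℝ×ℝ) ∈ Set.Ici (0:ℝ) ×ˢ (Set.univ : Set ℝ) :=
    Set.mem_prod.mpr ⟨ha1, trivial⟩
  have hb' : ((b.1, -b.2) : ℝ×ℝ) ∈ Set.Ici (0:ℝ) ×ˢ (Set.univ : Set ℝ) :=
    Set.mem_prod.mpr ⟨hb1, trivial⟩
  have h2 := hf.2 ha' hb' hσ hτ hστ
  have e : ((σ • a + τ • b).1, -(σ • a + τ • b).2)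
      = σ • ((a.1, -a.2) : ℝ×ℝ) + τ • ((b.1, -b.2) : ℝ×ℝ) := by
    apply Prod.ext <;> simp [Prod.smul_fst, Prod.smul_snd, smul_eq_mul] <;> ring
  dsimp only
  rw [e]
  exact h2

lemma main_gt2 {p : ℝ} (hp : 2 < p) :
    ConvexOn ℝ (Set.Ici (0 : ℝ) ×ˢ (Set.univ : Set ℝ)) (Yplus p) := by
  refine ⟨(convex_Ici 0).prod convex_univ, ?_⟩
  intro a ha b hb σ τ hσ hτ hστ
  have ha1 : (0:ℝ) ≤ a.1 := (Set.mem_prod.mp ha).1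
  have hb1 : (0:ℝ) ≤ b.1 := (Set.mem_prod.mp hb).1
  have hseg := seg_convexOn hp a.1 a.2 (b.1 - a.1) (b.2 - a.2) ha1 (by linarith)
  have h0m : (0:ℝ) ∈ Set.Icc (0:ℝ) 1 := by constructor <;> norm_num
  have h1m : (1:ℝ) ∈ Set.Icc (0:ℝ) 1 := by constructor <;> norm_num
  have key := hseg.2 h0m h1m hσ hτ hστ
  have hτeq : σ • (0:ℝ) + τ • (1:ℝ) = τ := by simp
  rw [hτeq] at key
  dsimp only at key
  have hσ1 : σ = 1 - τ := by linarith
  have e0 : (a.1 + 0 * (b.1 - a.1)) * max (a.2 + 0 * (b.2 - a.2)) 0 ^ (p - 1)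
      + ((a.1 + 0 * (b.1 - a.1)) ^ 2 + (a.2 + 0 * (b.2 - a.2)) ^ 2) ^ (p / 2)
      = Yplus p a := by
    rw [Yplus, sqrt_rpow_eq (by positivity)]
    norm_num
  have e1 : (a.1 + 1 * (b.1 - a.1)) * max (a.2 + 1 * (b.2 - a.2)) 0 ^ (p - 1)
      + ((a.1 + 1 * (b.1 - a.1)) ^ 2 + (a.2 + 1 * (b.2 - a.2)) ^ 2) ^ (p / 2)
      = Yplus p b := by
    rw [Yplus, sqrt_rpow_eq (by positivity)]
    norm_num
  have eτ : (a.1 + τ * (b.1 - a.1)) * max (a.2 + τ * (b.2 - a.2)) 0 ^ (p - 1)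
      + ((a.1 + τ * (b.1 - a.1)) ^ 2 + (a.2 + τ * (b.2 - a.2)) ^ 2) ^ (p / 2)
      = Yplus p (σ • a + τ • b) := by
    rw [Yplus, sqrt_rpow_eq (by positivity)]
    have c1 : (σ • a + τ • b).1 = a.1 + τ * (b.1 - a.1) := by
      simp [Prod.smul_fst, smul_eq_mul, hσ1]; ring
    have c2 : (σ • a + τ • b).2 = a.2 + τ * (b.2 - a.2) := by
      simp [Prod.smul_snd, smul_eq_mul, hσ1]; ring
    rw [c1, c2]
  rw [e0, e1, eτ] at key
  exact key

lemma main_eq2 :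
    ConvexOn ℝ (Set.Ici (0 : ℝ) ×ˢ (Set.univ : Set ℝ)) (Yplus 2) := by
  have hq1 : ConvexOn ℝ (Set.univ : Set (ℝ×ℝ)) (fun z : ℝ×ℝ => z.1*z.2 + (z.1^2+z.2^2)) := by
    refine ⟨convex_univ, ?_⟩
    intro a _ b _ σ τ hσ hτ hστ
    have hσ1 : σ = 1 - τ := by linarith
    subst hσ1
    simp only [Prod.fst_add, Prod.snd_add, Prod.smul_fst, Prod.smul_snd, smul_eq_mul]
    nlinarith [mul_nonneg (mul_nonneg hσ hτ) (sq_nonneg (a.1 - b.1 + (a.2 - b.2))),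
      mul_nonneg (mul_nonneg hσ hτ) (sq_nonneg (a.1 - b.1)),
      mul_nonneg (mul_nonneg hσ hτ) (sq_nonneg (a.2 - b.2))]
  have hq2 : ConvexOn ℝ (Set.univ : Set (ℝ×ℝ)) (fun z : ℝ×ℝ => z.1^2+z.2^2) := by
    refine ⟨convex_univ, ?_⟩
    intro a _ b _ σ τ hσ hτ hστ
    have hσ1 : σ = 1 - τ := by linarith
    subst hσ1
    simp only [Prod.fst_add, Prod.snd_add, Prod.smul_fst, Prod.smul_snd, smul_eq_mul]
    nlinarith [mul_nonneg (mul_nonneg hσ hτ) (sq_nonneg (a.1 - b.1)),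
      mul_nonneg (mul_nonneg hσ hτ) (sq_nonneg (a.2 - b.2))]
  have hs : Convex ℝ (Set.Ici (0:ℝ) ×ˢ (Set.univ : Set ℝ)) := (convex_Ici 0).prod convex_univ
  have hsup := (hq1.subset (Set.subset_univ _) hs).sup (hq2.subset (Set.subset_univ _) hs)
  apply convexOn_congrOn hsup
  intro z hz
  have hz1 : (0:ℝ) ≤ z.1 := (Set.mem_prod.mp hz).1
  have l1 : Yplus 2 z = z.1 * max z.2 0 + (z.1^2 + z.2^2) := by
    rw [Yplus, show (2:ℝ) - 1 = 1 by norm_num, Real.rpow_one, Real.rpow_two,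
      Real.sq_sqrt (by positivity)]
  have l2 : z.1 * max z.2 0 = max (z.1 * z.2) 0 := by
    rw [mul_max_of_nonneg _ _ hz1, mul_zero]
  rw [Pi.sup_apply, l1, l2]
  rw [← max_add_add_right]
  norm_num

theorem Yplus_Yminus_convex (p : ℝ) (hp : 2 ≤ p) :
    ConvexOn ℝ (Set.Ici (0 : ℝ) ×ˢ (Set.univ : Set ℝ)) (Yplus p) ∧
    ConvexOn ℝ (Set.Ici (0 : ℝ) ×ˢ (Set.univ : Set ℝ)) (Yminus p) := by
  have hplus : ConvexOn ℝ (Set.Ici (0 : ℝ) ×ˢ (Set.univ : Set ℝ)) (Yplus p) := by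
    rcases hp.eq_or_lt with heq | hlt
    · rw [← heq]
      exact main_eq2
    · exact main_gt2 hlt
  refine ⟨hplus, ?_⟩
  have hm : Yminus p = fun z => Yplus p (z.1, -z.2) := by
    funext z
    rw [Yminus, Yplus]
    simp [neg_sq]
  rw [hm]
  exact reflectConv hplus
end
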